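/- arXiv:2201.03646 — 8 statements merged into one kernel-verified Lean document; each statement's English description precedes it below -/
import Mathlib

section
/- (Lemma 1) Let c ≥ 0, σ ∈ {−1, 1}, V ⊆ ℝ open, I ⊆ ℝ an open interval containing σ, and let f : ℝ × ℝ → ℂ be C^∞ on V × I, satisfying there the equation (1−x²)∂²_x f − 2x ∂_x f − c²x² f = (1−y²)∂²_y f − 2y ∂_y f − c²y² f. Define functions g_k : V → ℂ by g_0(x) = f(x, σ) and, for k ≥ 0, g_{k+1} = ( (T + c² + k(k+1)) g_k − 2c²k g_{k−1} + c²k(k−1) g_{k−2} ) / (2(k+1)), with the convention g_j = 0 for j < 0, where T is the confluent Heun operator acting in the variable x. Then for every integer k ≥ 0 and every x ∈ V, ∂_y^k f(x, σ) = (−σ)^k g_k(x). -/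
open Set

/-- `k`-th partial derivative in the second (y) variable. -/
noncomputable def dY (f : ℝ × ℝ → ℂ) (k : ℕ) (p : ℝ × ℝ) : ℂ :=
  iteratedDeriv k (fun y => f (p.1, y)) p.2

/-- The confluent Heun operator `(T g)(x) = (1-x²) g''(x) - 2x g'(x) - c²x² g(x)`. -/
noncomputable def heunOp (c : ℝ) (g : ℝ → ℂ) (x : ℝ) : ℂ :=
  (1 - (x : ℂ) ^ 2) * iteratedDeriv 2 g x - 2 * (x : ℂ) * deriv g x
    - (c : ℂ) ^ 2 * (x : ℂ) ^ 2 * g x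

open Topology Filter

noncomputable def pd (v : ℝ × ℝ) (u : ℝ × ℝ → ℂ) (p : ℝ × ℝ) : ℂ := fderiv ℝ u p v

noncomputable def psi (f : ℝ × ℝ → ℂ) : ℕ → ℝ × ℝ → ℂ
  | 0 => f
  | k+1 => pd (0,1) (psi f k)

noncomputable def tOp (c : ℝ) (u : ℝ×ℝ→ℂ) (p : ℝ×ℝ) : ℂ :=
  (1 - (p.1:ℂ)^2) * pd (1,0) (pd (1,0) u) p - 2*(p.1:ℂ) * pd (1,0) u p
    - (c:ℂ)^2*(p.1:ℂ)^2 * u p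

variable {U : Set (ℝ×ℝ)} {u f : ℝ×ℝ→ℂ} {p : ℝ×ℝ} {x y : ℝ} {c : ℝ}

lemma pd_contDiffOn (hU : IsOpen U) (hu : ContDiffOn ℝ (⊤ : ℕ∞) u U) (v : ℝ×ℝ) :
    ContDiffOn ℝ (⊤ : ℕ∞) (pd v u) U :=
  (hu.fderiv_of_isOpen hU (by simp)).clm_apply contDiffOn_const

lemma diffAt (hU : IsOpen U) (hu : ContDiffOn ℝ (⊤ : ℕ∞) u U) (hp : p ∈ U) :
    DifferentiableAt ℝ u p :=
  ((hu.differentiableOn (by simp)).differentiableAt (hU.mem_nhds hp))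

lemma sliceY (hu : DifferentiableAt ℝ u (x,y)) :
    HasDerivAt (fun t => u (x,t)) (pd (0,1) u (x,y)) y := by
  have h1 : HasDerivAt (fun t : ℝ => ((x:ℝ), t)) ((0:ℝ),(1:ℝ)) y :=
    (hasDerivAt_const y x).prodMk (hasDerivAt_id y)
  exact hu.hasFDerivAt.comp_hasDerivAt y h1

lemma sliceX (hu : DifferentiableAt ℝ u (x,y)) :
    HasDerivAt (fun t => u (t,y)) (pd (1,0) u (x,y)) x := by
  have h1 : HasDerivAt (fun t : ℝ => (t, y)) ((1:ℝ),(0:ℝ)) x :=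
    (hasDerivAt_id x).prodMk (hasDerivAt_const x y)
  exact hu.hasFDerivAt.comp_hasDerivAt x h1

lemma pd_swap (hU : IsOpen U) (hu : ContDiffOn ℝ (⊤ : ℕ∞) u U) (hp : p ∈ U) (v w : ℝ×ℝ) :
    pd v (pd w u) p = pd w (pd v u) p := by
  have hca : ContDiffAt ℝ (⊤ : ℕ∞) u p := hu.contDiffAt (hU.mem_nhds hp)
  have hsym := hca.isSymmSndFDerivAt (by rw [minSmoothness_of_isRCLikeNormedField]; exact WithTop.coe_le_coe.mpr (le_top : (2:ℕ∞) ≤ ⊤))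
  have hdf : DifferentiableAt ℝ (fderiv ℝ u) p :=
    ((hu.fderiv_of_isOpen hU (m := (⊤ : ℕ∞)) (by simp)).differentiableOn (by simp)).differentiableAt (hU.mem_nhds hp)
  have key : ∀ z : ℝ×ℝ, ∀ q : ℝ×ℝ, fderiv ℝ (pd z u) p q = fderiv ℝ (fderiv ℝ u) p q z := by
    intro z q
    have h2 : HasFDerivAt (fun r => fderiv ℝ u r z)
        ((ContinuousLinearMap.apply ℝ ℂ z).comp (fderiv ℝ (fderiv ℝ u) p)) p :=
      (ContinuousLinearMap.apply ℝ ℂ z).hasFDerivAt.comp p hdf.hasFDerivAt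
    have h3 : fderiv ℝ (pd z u) p
        = (ContinuousLinearMap.apply ℝ ℂ z).comp (fderiv ℝ (fderiv ℝ u) p) := h2.fderiv
    rw [show pd z u = fun r => fderiv ℝ u r z from rfl] at *
    rw [h3]; rfl
  show fderiv ℝ (pd w u) p v = fderiv ℝ (pd v u) p w
  rw [key w v, key v w]
  exact hsym v w

lemma pd_congr {u₁ u₂ : ℝ×ℝ→ℂ} (v : ℝ×ℝ) (h : u₁ =ᶠ[𝓝 p] u₂) : pd v u₁ p = pd v u₂ p := by
  unfold pd; rw [h.fderiv_eq]

lemma nhdsY (hU : IsOpen U) (hp : (x,y) ∈ U) : ∀ᶠ t in 𝓝 y, (x,t) ∈ U := by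
  have hc : ContinuousAt (fun t : ℝ => ((x:ℝ),t)) y :=
    (continuous_const.prodMk continuous_id).continuousAt
  exact hc.preimage_mem_nhds (hU.mem_nhds hp)

lemma nhdsX (hU : IsOpen U) (hp : (x,y) ∈ U) : ∀ᶠ t in 𝓝 x, (t,y) ∈ U := by
  have hc : ContinuousAt (fun t : ℝ => (t,(y:ℝ))) x :=
    (continuous_id.prodMk continuous_const).continuousAt
  exact hc.preimage_mem_nhds (hU.mem_nhds hp)

lemma psi_contDiffOn (hU : IsOpen U) (hf : ContDiffOn ℝ (⊤ : ℕ∞) f U) :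
    ∀ k, ContDiffOn ℝ (⊤ : ℕ∞) (psi f k) U
  | 0 => hf
  | (k+1) => pd_contDiffOn hU (psi_contDiffOn hU hf k) _

lemma dY_eq_psi (hU : IsOpen U) (hf : ContDiffOn ℝ (⊤ : ℕ∞) f U) :
    ∀ k, ∀ p ∈ U, dY f k p = psi f k p := by
  intro k
  induction k with
  | zero => intro p hp; simp [dY, psi]
  | succ k ih =>
    intro p hp
    have h1 : dY f (k+1) p = deriv (fun t => dY f k (p.1, t)) p.2 := by
      rw [dY, iteratedDeriv_succ]; rfl
    rw [h1]
    have hev : (fun t => dY f k (p.1, t)) =ᶠ[𝓝 p.2] (fun t => psi f k (p.1, t)) := by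
      filter_upwards [nhdsY hU (by rwa [Prod.mk.eta] : ((p.1, p.2) : ℝ×ℝ) ∈ U)] with t ht
      exact ih _ ht
    rw [hev.deriv_eq]
    have hd : DifferentiableAt ℝ (psi f k) (p.1, p.2) :=
      diffAt hU (psi_contDiffOn hU hf k) (by rwa [Prod.mk.eta])
    have := (sliceY hd).deriv
    rw [this, Prod.mk.eta]
    rfl

lemma heunOp_slice (hU : IsOpen U) (hu : ContDiffOn ℝ (⊤ : ℕ∞) u U) (hp : (x,y) ∈ U) :
    heunOp c (fun t => u (t, y)) x = tOp c u (x,y) := by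
  have hpd1 := pd_contDiffOn hU hu ((1:ℝ),(0:ℝ))
  have hder : deriv (fun t => u (t,y)) x = pd (1,0) u (x,y) := (sliceX (diffAt hU hu hp)).deriv
  have hev : deriv (fun t => u (t,y)) =ᶠ[𝓝 x] fun t => pd (1,0) u (t,y) := by
    filter_upwards [nhdsX hU hp] with t ht
    exact (sliceX (diffAt hU hu ht)).deriv
  have h2 : iteratedDeriv 2 (fun t => u (t,y)) x = pd (1,0) (pd (1,0) u) (x,y) := by
    rw [show (2:ℕ) = 1+1 from rfl, iteratedDeriv_succ, iteratedDeriv_one, hev.deriv_eq]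
    exact (sliceX (diffAt hU hpd1 hp)).deriv
  rw [heunOp, hder, h2]; rfl

/-- y-derivative of the tOp-slice. -/
lemma pdY_tOp (hU : IsOpen U) (hu : ContDiffOn ℝ (⊤ : ℕ∞) u U) (hp : (x,y) ∈ U) :
    HasDerivAt (fun t => tOp c u (x,t)) (tOp c (pd (0,1) u) (x,y)) y := by
  have hu1 := pd_contDiffOn hU hu ((1:ℝ),(0:ℝ))
  have hu11 := pd_contDiffOn hU hu1 ((1:ℝ),(0:ℝ))
  have huY := pd_contDiffOn hU hu ((0:ℝ),(1:ℝ))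
  have huY1 := pd_contDiffOn hU huY ((1:ℝ),(0:ℝ))
  have hA : HasDerivAt (fun t => pd (1,0) (pd (1,0) u) (x,t))
      (pd (0,1) (pd (1,0) (pd (1,0) u)) (x,y)) y := sliceY (diffAt hU hu11 hp)
  have hB : HasDerivAt (fun t => pd (1,0) u (x,t)) (pd (0,1) (pd (1,0) u) (x,y)) y :=
    sliceY (diffAt hU hu1 hp)
  have hC : HasDerivAt (fun t => u (x,t)) (pd (0,1) u (x,y)) y := sliceY (diffAt hU hu hp)
  have eB : pd (0,1) (pd (1,0) u) (x,y) = pd (1,0) (pd (0,1) u) (x,y) :=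
    pd_swap hU hu hp (0,1) (1,0)
  have eA : pd (0,1) (pd (1,0) (pd (1,0) u)) (x,y) = pd (1,0) (pd (1,0) (pd (0,1) u)) (x,y) := by
    rw [pd_swap hU hu1 hp (0,1) (1,0)]
    apply pd_congr
    filter_upwards [hU.mem_nhds hp] with q hq
    exact pd_swap hU hu hq (0,1) (1,0)
  rw [eA] at hA; rw [eB] at hB
  have := ((hA.const_mul ((1:ℂ)-(x:ℂ)^2)).sub (hB.const_mul (2*(x:ℂ)))).sub
    (hC.const_mul ((c:ℂ)^2*(x:ℂ)^2))
  exact this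

noncomputable def rhsR (c : ℝ) (f : ℝ×ℝ→ℂ) (k : ℕ) (p : ℝ×ℝ) : ℂ :=
  (1 - (p.2:ℂ)*(p.2:ℂ)) * psi f (k+2) p - 2*((k:ℂ)+1)*(p.2:ℂ) * psi f (k+1) p
  - ((k:ℂ)*((k:ℂ)+1) + (c:ℂ)^2*((p.2:ℂ)*(p.2:ℂ))) * psi f k p
  - 2*(c:ℂ)^2*(k:ℂ)*(p.2:ℂ) * psi f (k-1) p
  - (c:ℂ)^2*(k:ℂ)*((k:ℂ)-1) * psi f (k-2) p

lemma chainE (hU : IsOpen U) (hf : ContDiffOn ℝ (⊤ : ℕ∞) f U)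
    (h0 : ∀ p ∈ U, tOp c f p = (1-(p.2:ℂ)^2) * psi f 2 p - 2*(p.2:ℂ)*psi f 1 p
      - (c:ℂ)^2*(p.2:ℂ)^2 * f p) :
    ∀ k, ∀ x y, (x,y) ∈ U → tOp c (psi f k) (x,y) = rhsR c f k (x,y) := by
  intro k
  induction k with
  | zero =>
    intro x y hp
    have h := h0 (x,y) hp
    simp only [rhsR, psi] at *
    push_cast
    linear_combination h
  | succ k ih =>
    intro x y hp
    have hev : (fun t => tOp c (psi f k) (x,t)) =ᶠ[𝓝 y] (fun t => rhsR c f k (x,t)) := by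
      filter_upwards [nhdsY hU hp] with t ht
      exact ih x t ht
    have hL : HasDerivAt (fun t => tOp c (psi f k) (x,t)) (tOp c (psi f (k+1)) (x,y)) y :=
      pdY_tOp hU (psi_contDiffOn hU hf k) hp
    have hPs : ∀ j:ℕ, HasDerivAt (fun t => psi f j (x,t)) (psi f (j+1) (x,y)) y :=
      fun j => sliceY (diffAt hU (psi_contDiffOn hU hf j) hp)
    have hid : HasDerivAt (fun t:ℝ => ((t:ℂ))) 1 y := by
      simpa using (hasDerivAt_id y).ofReal_comp
    have h1 := ((hid.mul hid).const_sub 1).mul (hPs (k+2))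
    have h2 := (hid.const_mul (2*((k:ℂ)+1))).mul (hPs (k+1))
    have h3 := (((hid.mul hid).const_mul ((c:ℂ)^2)).const_add ((k:ℂ)*((k:ℂ)+1))).mul (hPs k)
    have h4 := (hid.const_mul (2*(c:ℂ)^2*(k:ℂ))).mul (hPs (k-1))
    have h5 := (hPs (k-2)).const_mul ((c:ℂ)^2*(k:ℂ)*((k:ℂ)-1))
    have hR := (((h1.sub h2).sub h3).sub h4).sub h5
    have hR' : HasDerivAt (fun t => rhsR c f k (x,t))
        ((-(1*(y:ℂ) + (y:ℂ)*1) * psi f (k+2) (x,y)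
            + (1-(y:ℂ)*(y:ℂ)) * psi f (k+2+1) (x,y)
          - (2*((k:ℂ)+1)*1 * psi f (k+1) (x,y)
            + 2*((k:ℂ)+1)*(y:ℂ) * psi f (k+1+1) (x,y))
          - ((c:ℂ)^2*(1*(y:ℂ) + (y:ℂ)*1) * psi f k (x,y)
            + ((k:ℂ)*((k:ℂ)+1) + (c:ℂ)^2*((y:ℂ)*(y:ℂ))) * psi f (k+1) (x,y))
          - (2*(c:ℂ)^2*(k:ℂ)*1 * psi f (k-1) (x,y)
            + 2*(c:ℂ)^2*(k:ℂ)*(y:ℂ) * psi f (k-1+1) (x,y))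
          - (c:ℂ)^2*(k:ℂ)*((k:ℂ)-1) * psi f (k-2+1) (x,y))) y := by
      unfold rhsR
      exact hR
    have hval : tOp c (psi f (k+1)) (x,y) = deriv (fun t => rhsR c f k (x,t)) y := by
      rw [← hL.deriv]; exact hev.deriv_eq
    rw [hval, hR'.deriv]
    have fixA : (k:ℂ) * psi f (k-1+1) (x,y) = (k:ℂ) * psi f k (x,y) := by
      cases k <;> simp
    have fixB : (k:ℂ)*((k:ℂ)-1) * psi f (k-2+1) (x,y)
        = (k:ℂ)*((k:ℂ)-1) * psi f (k-1) (x,y) := by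
      rcases k with _|_|n
      · simp
      · norm_num
      · rfl
    unfold rhsR
    push_cast
    linear_combination (-(2:ℂ)*(c:ℂ)^2*(y:ℂ)) * fixA + (-(c:ℂ)^2) * fixB

/-- Lemma 1: the `y`-derivatives of a solution of `T_x f = T_y f` at `y = σ = ±1`
are given by `∂_y^k f(x,σ) = (−σ)^k g_k(x)`, where the `g_k` are produced from `g_0 = f(·,σ)`
by the four-term recurrence in `T_x`. (Natural-number subtraction truncates `g_{k-1}, g_{k-2}`
for small `k`, which is harmless since their coefficients vanish there.) -/
theorem stmt2 (c σ : ℝ) (hc : 0 ≤ c) (hσ : σ = 1 ∨ σ = -1)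
    (V : Set ℝ) (hV : IsOpen V) (a b : ℝ) (hσI : σ ∈ Ioo a b)
    (f : ℝ × ℝ → ℂ)
    (hf : ContDiffOn ℝ (⊤ : ℕ∞) f (V ×ˢ Ioo a b))
    (hpde : ∀ p ∈ V ×ˢ Ioo a b,
      heunOp c (fun x => f (x, p.2)) p.1
        = (1 - (p.2 : ℂ) ^ 2) * dY f 2 p - 2 * (p.2 : ℂ) * dY f 1 p
          - (c : ℂ) ^ 2 * (p.2 : ℂ) ^ 2 * f p)
    (g : ℕ → ℝ → ℂ)
    (hg0 : ∀ x ∈ V, g 0 x = f (x, σ))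
    (hgrec : ∀ (k : ℕ), ∀ x ∈ V,
      g (k + 1) x =
        (heunOp c (g k) x + ((c : ℂ) ^ 2 + (k : ℂ) * ((k : ℂ) + 1)) * g k x
          - 2 * (c : ℂ) ^ 2 * (k : ℂ) * g (k - 1) x
          + (c : ℂ) ^ 2 * (k : ℂ) * ((k : ℂ) - 1) * g (k - 2) x) / (2 * ((k : ℂ) + 1))) :
    ∀ (k : ℕ), ∀ x ∈ V, dY f k (x, σ) = (-(σ : ℂ)) ^ k * g k x := by
  have hU : IsOpen (V ×ˢ Ioo a b) := hV.prod isOpen_Ioo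
  have hσmem : ∀ x ∈ V, (x,σ) ∈ V ×ˢ Ioo a b := fun x hx => ⟨hx, hσI⟩
  have ht2 : (σ:ℂ)*(σ:ℂ) = 1 := by rcases hσ with h|h <;> subst h <;> norm_num
  have h0 : ∀ p ∈ V ×ˢ Ioo a b, tOp c f p = (1-(p.2:ℂ)^2) * psi f 2 p - 2*(p.2:ℂ)*psi f 1 p
      - (c:ℂ)^2*(p.2:ℂ)^2 * f p := by
    intro p hp
    have h := hpde p hp
    have hs : heunOp c (fun x => f (x, p.2)) p.1 = tOp c f (p.1,p.2) :=
      heunOp_slice hU hf (by rwa [Prod.mk.eta])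
    rw [hs, Prod.mk.eta] at h
    rw [h, dY_eq_psi hU hf 2 p hp, dY_eq_psi hU hf 1 p hp]
  intro k
  induction k using Nat.strong_induction_on with
  | _ k IH =>
    intro x hx
    rw [dY_eq_psi hU hf k _ (hσmem x hx)]
    rcases k with _|m
    · rw [hg0 x hx]; simp [psi]
    · set s : ℂ := -(σ:ℂ) with hsdef
      have hss : s*s = 1 := by rw [hsdef, neg_mul_neg, ht2]
      have hpow : ∀ j:ℕ, s^j*s^j = 1 := fun j => by rw [← mul_pow, hss, one_pow]
      have hst : s*(σ:ℂ) = -1 := by rw [hsdef, neg_mul, ht2]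
      have hIH : ∀ j, j ≤ m → psi f j (x,σ) = s^j * g j x := fun j hj => by
        rw [← dY_eq_psi hU hf j _ (hσmem x hx)]
        exact IH j (Nat.lt_succ_of_le hj) x hx
      have h3a := hIH m le_rfl
      have h3b := hIH (m-1) (Nat.sub_le m 1)
      have h3c := hIH (m-2) (Nat.sub_le m 2)
      have hsm := psi_contDiffOn hU hf m
      have hgm : ∀ t ∈ V, g m t = s^m * psi f m (t,σ) := fun t ht => by
        have h : psi f m (t,σ) = s^m * g m t := by
          rw [← dY_eq_psi hU hf m _ (hσmem t ht)]
          exact IH m (Nat.lt_succ_self m) t ht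
        rw [h, ← mul_assoc, hpow m, one_mul]
      have hd1 : ∀ t ∈ V, HasDerivAt (fun r => psi f m (r,σ)) (pd (1,0) (psi f m) (t,σ)) t :=
        fun t ht => sliceX (diffAt hU hsm (hσmem t ht))
      have hderiv : ∀ t ∈ V, deriv (g m) t = s^m * pd (1,0) (psi f m) (t,σ) := fun t ht => by
        have hev : g m =ᶠ[𝓝 t] fun r => s^m * psi f m (r,σ) := by
          filter_upwards [hV.mem_nhds ht] with r hr; exact hgm r hr
        rw [hev.deriv_eq]
        exact ((hd1 t ht).const_mul (s^m)).deriv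
      have hderiv2 : iteratedDeriv 2 (g m) x = s^m * pd (1,0) (pd (1,0) (psi f m)) (x,σ) := by
        rw [show (2:ℕ) = 1+1 from rfl, iteratedDeriv_succ, iteratedDeriv_one]
        have hev : deriv (g m) =ᶠ[𝓝 x] fun t => s^m * pd (1,0) (psi f m) (t,σ) := by
          filter_upwards [hV.mem_nhds hx] with t ht; exact hderiv t ht
        rw [hev.deriv_eq]
        have hd2 : HasDerivAt (fun t => pd (1,0) (psi f m) (t,σ))
            (pd (1,0) (pd (1,0) (psi f m)) (x,σ)) x :=
          sliceX (diffAt hU (pd_contDiffOn hU hsm (1,0)) (hσmem x hx))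
        exact (hd2.const_mul (s^m)).deriv
      have hit2' : iteratedDeriv 2 (fun t => psi f m (t,σ)) x
          = pd (1,0) (pd (1,0) (psi f m)) (x,σ) := by
        rw [show (2:ℕ) = 1+1 from rfl, iteratedDeriv_succ, iteratedDeriv_one]
        have hev : deriv (fun t => psi f m (t,σ)) =ᶠ[𝓝 x] fun t => pd (1,0) (psi f m) (t,σ) := by
          filter_upwards [nhdsX hU (hσmem x hx)] with t ht
          exact (sliceX (diffAt hU hsm ht)).deriv
        rw [hev.deriv_eq]
        exact (sliceX (diffAt hU (pd_contDiffOn hU hsm (1,0)) (hσmem x hx))).deriv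
      have hH : heunOp c (g m) x = s^m * tOp c (psi f m) (x,σ) := by
        rw [← heunOp_slice hU hsm (hσmem x hx)]
        unfold heunOp
        rw [hderiv x hx, hderiv2, hgm x hx, (hd1 x hx).deriv, hit2']
        ring
      have hE2 : tOp c (psi f m) (x,σ) = (1-(σ:ℂ)*(σ:ℂ)) * psi f (m+2) (x,σ)
          - 2*((m:ℂ)+1)*(σ:ℂ) * psi f (m+1) (x,σ)
          - ((m:ℂ)*((m:ℂ)+1) + (c:ℂ)^2*((σ:ℂ)*(σ:ℂ))) * psi f m (x,σ)
          - 2*(c:ℂ)^2*(m:ℂ)*(σ:ℂ) * psi f (m-1) (x,σ)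
          - (c:ℂ)^2*(m:ℂ)*((m:ℂ)-1) * psi f (m-2) (x,σ) :=
        chainE hU hf h0 m x σ (hσmem x hx)
      have qA : (m:ℂ)*s^(m-1) = (m:ℂ)*s^(m+1) := by
        cases m with
        | zero => simp
        | succ n =>
          rw [Nat.add_sub_cancel]
          push_cast
          linear_combination (-((n:ℂ)+1)*s^n) * hss
      have qB : (m:ℂ)*((m:ℂ)-1)*(s*s^(m-2)) = (m:ℂ)*((m:ℂ)-1)*s^(m+1) := by
        rcases m with _|_|n
        · simp
        · norm_num
        · rw [show n+1+1-2 = n from rfl]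
          push_cast
          linear_combination (-((n:ℂ)+2)*((n:ℂ)+1)*s^n*s) * hss
      have hden : (2*((m:ℂ)+1)) ≠ 0 := mul_ne_zero two_ne_zero (Nat.cast_add_one_ne_zero m)
      rw [hgrec m x hx, ← mul_div_assoc, eq_div_iff hden]
      push_cast
      linear_combination (-(s^(m+1)) * hH) - (s * tOp c (psi f m) (x,σ)) * hpow m - s * hE2
        + (s * psi f (m+2) (x,σ)) * ht2 + (2*((m:ℂ)+1) * psi f (m+1) (x,σ)) * hst
        + ((c:ℂ)^2 * s * psi f m (x,σ)) * ht2
        + (2*(c:ℂ)^2*(m:ℂ) * psi f (m-1) (x,σ)) * hst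
        + (((m:ℂ)*((m:ℂ)+1) + (c:ℂ)^2) * s) * h3a - (2*(c:ℂ)^2*(m:ℂ)) * h3b
        - (2*(c:ℂ)^2* (g (m-1) x)) * qA + ((c:ℂ)^2*(m:ℂ)*((m:ℂ)-1)*s) * h3c
        + ((c:ℂ)^2 * (g (m-2) x)) * qB
end

section
/- Let c ≥ 0 and λ ∈ ℝ, and define the real sequence (u_k)_{k≥0} by u_0 = 1 and, for k ≥ 0, u_{k+1} = ( (λ + c² + k(k+1)) u_k − 2c²k u_{k−1} + c²k(k−1) u_{k−2} ) / (2(k+1)), with the convention u_j = 0 for j < 0. Then for every ξ ∈ (−2, 2), the series Σ_{k≥0} ξ^k u_k / k! converges absolutely. -/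
open Set

set_option maxHeartbeats 1000000 in
/-- for `ξ ∈ (−2,2)` the series `Σ_k ξ^k u_k/k!` converges absolutely, where
`u_k = U_k(λ)` are generated by the four-term recurrence. -/
theorem stmt4 (c l : ℝ) (hc : 0 ≤ c)
    (u : ℕ → ℝ) (hu0 : u 0 = 1)
    (hurec : ∀ k : ℕ,
      u (k + 1) =
        ((l + c ^ 2 + (k : ℝ) * ((k : ℝ) + 1)) * u k
          - 2 * c ^ 2 * (k : ℝ) * u (k - 1)
          + c ^ 2 * (k : ℝ) * ((k : ℝ) - 1) * u (k - 2)) / (2 * ((k : ℝ) + 1))) :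
    ∀ ξ ∈ Ioo (-2 : ℝ) 2,
      Summable (fun k : ℕ => |ξ ^ k * u k / (k.factorial : ℝ)|) := by
  intro ξ hξ
  obtain ⟨hξ1, hξ2⟩ := hξ
  set t : ℝ := |ξ| with htdef
  have ht0 : 0 ≤ t := abs_nonneg ξ
  have ht2 : t < 2 := abs_lt.2 ⟨hξ1, hξ2⟩
  have htp : (0:ℝ) < t + 2 := by linarith
  set ρ : ℝ := 2 / (t + 2) with hρdef
  have hρ0 : 0 < ρ := by positivity
  have hρ1 : ρ ≤ 1 := by rw [hρdef, div_le_one htp]; linarith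
  have hρhalf : 1/2 < ρ := by rw [hρdef, lt_div_iff₀ htp]; linarith
  have htρ : t * ρ < 1 := by
    have h : t * ρ = 2 * t / (t + 2) := by rw [hρdef]; ring
    rw [h, div_lt_one htp]; linarith
  set E0 : ℝ := (|l| + c ^ 2) * ρ ^ 2 + 2 * c ^ 2 * ρ + c ^ 2 with hE0def
  set d : ℝ := ρ ^ 2 * (2 * ρ - 1) with hddef
  have hd : 0 < d := by
    have : 0 < 2 * ρ - 1 := by linarith
    positivity
  obtain ⟨N0, hN0⟩ := exists_nat_gt (E0 / d)
  set N' : ℕ := max N0 2 with hN'def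
  have hN'2 : 2 ≤ N' := le_max_right _ _
  have hkey : ∀ n : ℕ, N' ≤ n + 2 → E0 ≤ ((n:ℝ) + 3) ^ 2 * d := by
    intro n hn
    have hh : N0 ≤ n + 3 := by omega
    have h1 : (N0:ℝ) ≤ (n:ℝ) + 3 := by
      have := (Nat.cast_le (α := ℝ)).2 hh
      push_cast at this; linarith
    have h2 : E0 / d < (n:ℝ) + 3 := lt_of_lt_of_le hN0 h1
    have h3 : E0 < ((n:ℝ) + 3) * d := (div_lt_iff₀ hd).1 h2
    have h4 : (1:ℝ) ≤ (n:ℝ) + 3 := by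
      have := Nat.cast_nonneg (α := ℝ) n; linarith
    have h5 : ((n:ℝ) + 3) * d ≤ ((n:ℝ) + 3) ^ 2 * d := by
      have hx : (0:ℝ) ≤ d * (((n:ℝ) + 3) * ((n:ℝ) + 2)) := by
        have h6 : (0:ℝ) ≤ (n:ℝ) := Nat.cast_nonneg n
        have : (0:ℝ) ≤ ((n:ℝ) + 3) * ((n:ℝ) + 2) := by nlinarith
        exact mul_nonneg hd.le this
      nlinarith [hx]
    linarith
  -- the constant C
  have hne : (Finset.range (N' + 1)).Nonempty := ⟨0, by simp⟩
  set C : ℝ := (Finset.range (N' + 1)).sup' hne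
      (fun j => |u j| / (ρ ^ j * (j.factorial : ℝ))) with hCdef
  have hC1 : 1 ≤ C := by
    have h0 : (0:ℕ) ∈ Finset.range (N' + 1) := Finset.mem_range.2 (by omega)
    have h := Finset.le_sup' (fun j => |u j| / (ρ ^ j * (j.factorial : ℝ))) h0
    have he : |u 0| / (ρ ^ 0 * ((Nat.factorial 0 : ℕ) : ℝ)) = 1 := by
      simp [hu0]
    rw [← hCdef] at h
    calc (1:ℝ) = |u 0| / (ρ ^ 0 * ((Nat.factorial 0 : ℕ) : ℝ)) := he.symm
      _ ≤ C := h
  have hC0 : 0 ≤ C := by linarith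
  have hbase : ∀ j : ℕ, j ≤ N' → |u j| ≤ C * ρ ^ j * (j.factorial : ℝ) := by
    intro j hj
    have hm : j ∈ Finset.range (N' + 1) := Finset.mem_range.2 (by omega)
    have h1 := Finset.le_sup' (fun j => |u j| / (ρ ^ j * (j.factorial : ℝ))) hm
    rw [← hCdef] at h1
    have hp : (0:ℝ) < ρ ^ j * (j.factorial : ℝ) := by positivity
    rw [div_le_iff₀ hp] at h1
    calc |u j| ≤ C * (ρ ^ j * (j.factorial : ℝ)) := h1
      _ = C * ρ ^ j * (j.factorial : ℝ) := by ring
  -- main estimate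
  have main : ∀ k : ℕ, |u k| ≤ C * ρ ^ k * (k.factorial : ℝ) := by
    intro k
    induction k using Nat.strong_induction_on with
    | _ k ih =>
      rcases le_or_gt k N' with hk | hk
      · exact hbase k hk
      · obtain ⟨n, rfl⟩ : ∃ n, k = n + 3 := ⟨k - 3, by omega⟩
        have hn : N' ≤ n + 2 := by omega
        have ih2 := ih (n + 2) (by omega)
        have ih1 := ih (n + 1) (by omega)
        have ih0 := ih n (by omega)
        have hrec := hurec (n + 2)
        rw [show n + 2 - 1 = n + 1 from rfl, show n + 2 - 2 = n from rfl] at hrec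
        push_cast at hrec
        have hn0 : (0:ℝ) ≤ (n:ℝ) := Nat.cast_nonneg n
        have hden : (0:ℝ) < 2 * ((n:ℝ) + 2 + 1) := by linarith
        -- factorial identities
        have hf1 : ((n + 1).factorial : ℝ) = ((n:ℝ) + 1) * (n.factorial : ℝ) := by
          rw [Nat.factorial_succ]; push_cast; ring
        have hf2 : ((n + 2).factorial : ℝ)
            = ((n:ℝ) + 2) * ((n:ℝ) + 1) * (n.factorial : ℝ) := by
          rw [Nat.factorial_succ]; push_cast; rw [hf1]; ring
        have hf3 : ((n + 3).factorial : ℝ)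
            = ((n:ℝ) + 3) * (((n:ℝ) + 2) * ((n:ℝ) + 1)) * (n.factorial : ℝ) := by
          rw [Nat.factorial_succ]; push_cast; rw [hf2]; ring
        have hp1 : ρ ^ (n + 1) = ρ ^ n * ρ := pow_succ ρ n
        have hp2 : ρ ^ (n + 2) = ρ ^ n * ρ ^ 2 := by rw [pow_add]
        have hp3 : ρ ^ (n + 3) = ρ ^ n * ρ ^ 3 := by rw [pow_add]
        -- triangle inequality bound on numerator
        have hnum : |(l + c ^ 2 + ((n:ℝ) + 2) * ((n:ℝ) + 2 + 1)) * u (n + 2)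
              - 2 * c ^ 2 * ((n:ℝ) + 2) * u (n + 1)
              + c ^ 2 * ((n:ℝ) + 2) * ((n:ℝ) + 2 - 1) * u n|
            ≤ (|l| + c ^ 2 + ((n:ℝ) + 2) * ((n:ℝ) + 3)) * |u (n + 2)|
              + 2 * c ^ 2 * ((n:ℝ) + 2) * |u (n + 1)|
              + c ^ 2 * ((n:ℝ) + 2) * ((n:ℝ) + 1) * |u n| := by
          have t1 : |(l + c ^ 2 + ((n:ℝ) + 2) * ((n:ℝ) + 2 + 1)) * u (n + 2)|
              ≤ (|l| + c ^ 2 + ((n:ℝ) + 2) * ((n:ℝ) + 3)) * |u (n + 2)| := by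
            rw [abs_mul]
            apply mul_le_mul_of_nonneg_right _ (abs_nonneg _)
            calc |l + c ^ 2 + ((n:ℝ) + 2) * ((n:ℝ) + 2 + 1)|
                ≤ |l| + |c ^ 2 + ((n:ℝ) + 2) * ((n:ℝ) + 2 + 1)| := by
                  rw [add_assoc]; exact abs_add_le _ _
              _ = |l| + c ^ 2 + ((n:ℝ) + 2) * ((n:ℝ) + 3) := by
                  have hx : (0:ℝ) ≤ c ^ 2 + ((n:ℝ) + 2) * ((n:ℝ) + 2 + 1) := by positivity
                  rw [abs_of_nonneg hx]; ring
          have t2 : |2 * c ^ 2 * ((n:ℝ) + 2) * u (n + 1)|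
              = 2 * c ^ 2 * ((n:ℝ) + 2) * |u (n + 1)| := by
            rw [abs_mul, abs_of_nonneg (by positivity : (0:ℝ) ≤ 2 * c ^ 2 * ((n:ℝ) + 2))]
          have t3 : |c ^ 2 * ((n:ℝ) + 2) * ((n:ℝ) + 2 - 1) * u n|
              ≤ c ^ 2 * ((n:ℝ) + 2) * ((n:ℝ) + 1) * |u n| := by
            have hnn : (0:ℝ) ≤ c ^ 2 * ((n:ℝ) + 2) * ((n:ℝ) + 2 - 1) := by
              have : (0:ℝ) ≤ (n:ℝ) + 2 - 1 := by linarith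
              positivity
            rw [abs_mul, abs_of_nonneg hnn]
            apply le_of_eq; ring
          calc |(l + c ^ 2 + ((n:ℝ) + 2) * ((n:ℝ) + 2 + 1)) * u (n + 2)
                - 2 * c ^ 2 * ((n:ℝ) + 2) * u (n + 1)
                + c ^ 2 * ((n:ℝ) + 2) * ((n:ℝ) + 2 - 1) * u n|
              ≤ |(l + c ^ 2 + ((n:ℝ) + 2) * ((n:ℝ) + 2 + 1)) * u (n + 2)
                - 2 * c ^ 2 * ((n:ℝ) + 2) * u (n + 1)|
                + |c ^ 2 * ((n:ℝ) + 2) * ((n:ℝ) + 2 - 1) * u n| := abs_add_le _ _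
            _ ≤ |(l + c ^ 2 + ((n:ℝ) + 2) * ((n:ℝ) + 2 + 1)) * u (n + 2)|
                + |2 * c ^ 2 * ((n:ℝ) + 2) * u (n + 1)|
                + |c ^ 2 * ((n:ℝ) + 2) * ((n:ℝ) + 2 - 1) * u n| := by
                  have := abs_sub ((l + c ^ 2 + ((n:ℝ) + 2) * ((n:ℝ) + 2 + 1)) * u (n + 2))
                    (2 * c ^ 2 * ((n:ℝ) + 2) * u (n + 1))
                  linarith
            _ ≤ _ := by rw [t2]; linarith [t1, t3]
        -- inner scalar inequality
        have hinner : (|l| + c ^ 2 + ((n:ℝ) + 2) * ((n:ℝ) + 3)) * ρ ^ 2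
              + 2 * c ^ 2 * ρ + c ^ 2
            ≤ 2 * ((n:ℝ) + 3) ^ 2 * ρ ^ 3 := by
          have hk := hkey n hn
          rw [hE0def, hddef] at hk
          have hmono : ((n:ℝ) + 2) * ((n:ℝ) + 3) ≤ ((n:ℝ) + 3) ^ 2 := by nlinarith [hn0]
          have h6 : ((n:ℝ) + 2) * ((n:ℝ) + 3) * ρ ^ 2 ≤ ((n:ℝ) + 3) ^ 2 * ρ ^ 2 :=
            mul_le_mul_of_nonneg_right hmono (sq_nonneg ρ)
          nlinarith [hk, h6]
        -- combine
        rw [hrec, abs_div, abs_of_pos hden, div_le_iff₀ hden]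
        have hfac : (0:ℝ) ≤ C * ρ ^ n * (n.factorial : ℝ) * (((n:ℝ) + 2) * ((n:ℝ) + 1)) := by
          positivity
        have h5 := mul_le_mul_of_nonneg_left hinner hfac
        have hT : (|l| + c ^ 2 + ((n:ℝ) + 2) * ((n:ℝ) + 3)) * |u (n + 2)|
              + 2 * c ^ 2 * ((n:ℝ) + 2) * |u (n + 1)|
              + c ^ 2 * ((n:ℝ) + 2) * ((n:ℝ) + 1) * |u n|
            ≤ C * ρ ^ n * (n.factorial : ℝ) * (((n:ℝ) + 2) * ((n:ℝ) + 1))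
              * ((|l| + c ^ 2 + ((n:ℝ) + 2) * ((n:ℝ) + 3)) * ρ ^ 2
                + 2 * c ^ 2 * ρ + c ^ 2) := by
          rw [hf2, hp2] at ih2
          rw [hf1, hp1] at ih1
          have a2 := mul_le_mul_of_nonneg_left ih2
            (by positivity : (0:ℝ) ≤ |l| + c ^ 2 + ((n:ℝ) + 2) * ((n:ℝ) + 3))
          have a1 := mul_le_mul_of_nonneg_left ih1
            (by positivity : (0:ℝ) ≤ 2 * c ^ 2 * ((n:ℝ) + 2))
          have a0 := mul_le_mul_of_nonneg_left ih0
            (by positivity : (0:ℝ) ≤ c ^ 2 * ((n:ℝ) + 2) * ((n:ℝ) + 1))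
          linarith [a2, a1, a0]
        refine le_trans hnum (le_trans hT (le_trans h5 (le_of_eq ?_)))
        rw [hf3, hp3]; ring
  -- summability via geometric comparison
  have hgeom : Summable (fun k : ℕ => C * (t * ρ) ^ k) :=
    (summable_geometric_of_lt_one (by positivity) htρ).mul_left C
  apply Summable.of_nonneg_of_le (fun k => abs_nonneg _) _ hgeom
  intro k
  have hfpos : (0:ℝ) < (k.factorial : ℝ) := by exact_mod_cast k.factorial_pos
  have h1 : |ξ ^ k * u k / (k.factorial : ℝ)| = t ^ k * |u k| / (k.factorial : ℝ) := by
    rw [abs_div, abs_mul, abs_pow, Nat.abs_cast]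
  rw [h1, div_le_iff₀ hfpos]
  have h2 := mul_le_mul_of_nonneg_left (main k) (pow_nonneg ht0 k)
  calc t ^ k * |u k| ≤ t ^ k * (C * ρ ^ k * (k.factorial : ℝ)) := h2
    _ = C * (t * ρ) ^ k * (k.factorial : ℝ) := by rw [mul_pow]; ring
end

section
/- (Corollary 2) Let c ≥ 0 and λ ∈ ℝ, and define the real sequence (u_k)_{k≥0} by u_0 = 1 and, for k ≥ 0, u_{k+1} = ( (λ + c² + k(k+1)) u_k − 2c²k u_{k−1} + c²k(k−1) u_{k−2} ) / (2(k+1)), with u_j = 0 for j < 0. Define W : (−3, 1) → ℝ by W(y) = Σ_{k≥0} (y+1)^k u_k / k!. Then this series converges for every y ∈ (−3, 1), W is twice differentiable on (−3, 1), W(−1) = 1, and W satisfies the confluent Heun equation (1−y²) W''(y) − 2y W'(y) − c² y² W(y) − λ W(y) = 0 for all y ∈ (−3, 1). -/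
/-!
Put `x = y + 1`, so that `W(y) = Σ aₙ xⁿ` with `aₙ = uₙ / n!`. The recurrence for `uₖ` says
precisely that the exponential generating function `Σ uₙ xⁿ / n!` satisfies, as a formal power
series, the confluent Heun equation rewritten in the variable `x`. Its coefficients obey a
three-term recurrence whose leading ratio tends to `1/2`, so `|aₙ| ≤ C ρⁿ` for every `ρ > 1/2`
and the series converges absolutely on `|x| < 2`. There it may be differentiated term by term,
which turns the formal identity into the differential equation.
-/

open Set Finset Filter Topology PowerSeries

theorem exists_le_of_eventually_le_three_term {b : ℕ → ℝ} {α β γ : ℝ}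
    (hα : 0 ≤ α) (hβ : 0 ≤ β) (hγ : 0 ≤ γ) (hαβγ : α + β + γ ≤ 1)
    (hb : ∀ᶠ n in atTop, b (n + 3) ≤ α * b (n + 2) + β * b (n + 1) + γ * b n) :
    ∃ C, ∀ n, b n ≤ C := by
  obtain ⟨N, hN⟩ := eventually_atTop.1 hb
  set C := ∑ i ∈ range (N + 3), |b i|
  have hC : 0 ≤ C := sum_nonneg fun i _ => abs_nonneg _
  refine ⟨C, fun n => ?_⟩
  induction n using Nat.strong_induction_on with
  | _ n ih =>
    by_cases hn : n < N + 3
    · exact (le_abs_self _).trans (single_le_sum (fun i _ => abs_nonneg (b i)) (mem_range.2 hn))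
    · obtain ⟨m, rfl⟩ : ∃ m, n = m + 3 := ⟨n - 3, by omega⟩
      calc b (m + 3) ≤ α * b (m + 2) + β * b (m + 1) + γ * b m := hN m (by omega)
        _ ≤ α * C + β * C + γ * C := by gcongr <;> apply ih <;> omega
        _ ≤ C := by nlinarith

section HeunRecurrence

variable {c l : ℝ} {a : ℕ → ℝ}
  (hrec : ∀ n : ℕ, 2 * ((n : ℝ) + 3) ^ 2 * a (n + 3) =
    (((n : ℝ) + 2) * ((n : ℝ) + 3) + c ^ 2 + l) * a (n + 2) - 2 * c ^ 2 * a (n + 1) + c ^ 2 * a n)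
include hrec

theorem eventually_abs_le_of_heun_recurrence {ε : ℝ} (hε : 0 < ε) :
    ∀ᶠ n in atTop, |a (n + 3)| ≤ (1 / 2 + ε) * |a (n + 2)| + ε * |a (n + 1)| + ε * |a n| := by
  filter_upwards [(tendsto_natCast_atTop_atTop (R := ℝ)).eventually_ge_atTop
    ((c ^ 2 + |l|) / ε)] with n hn
  have hK : c ^ 2 + |l| ≤ ε * ((n : ℝ) + 3) ^ 2 := by
    rw [div_le_iff₀ hε] at hn
    nlinarith [abs_nonneg l, sq_nonneg c]
  have hpos : 0 < 2 * ((n : ℝ) + 3) ^ 2 := by positivity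
  have htri : 2 * ((n : ℝ) + 3) ^ 2 * |a (n + 3)| ≤
      (((n : ℝ) + 2) * ((n : ℝ) + 3) + c ^ 2 + |l|) * |a (n + 2)| + 2 * c ^ 2 * |a (n + 1)|
        + c ^ 2 * |a n| := by
    have h2 : |((n : ℝ) + 2) * ((n : ℝ) + 3) + c ^ 2 + l| ≤
        ((n : ℝ) + 2) * ((n : ℝ) + 3) + c ^ 2 + |l| := by
      refine (abs_add_le _ _).trans ?_
      rw [abs_of_nonneg (by positivity)]
    calc 2 * ((n : ℝ) + 3) ^ 2 * |a (n + 3)| = |2 * ((n : ℝ) + 3) ^ 2 * a (n + 3)| := by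
          rw [abs_mul, abs_of_pos hpos]
      _ ≤ _ := by
          rw [hrec]
          refine (abs_add_le _ _).trans (add_le_add ((abs_sub _ _).trans (add_le_add ?_ ?_)) ?_)
          all_goals rw [abs_mul]
          · exact mul_le_mul_of_nonneg_right h2 (abs_nonneg _)
          · rw [abs_of_nonneg (by positivity)]
          · rw [abs_of_nonneg (by positivity)]
  refine le_of_mul_le_mul_left (htri.trans ?_) hpos
  nlinarith [abs_nonneg (a n), abs_nonneg (a (n + 1)), abs_nonneg (a (n + 2)), abs_nonneg l,
    sq_nonneg c]

theorem summable_abs_mul_pow_of_heun_recurrence {r : ℝ} (hr0 : 0 ≤ r) (hr : r < 2) :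
    Summable fun n => |a n| * r ^ n := by
  set ρ : ℝ := 2 / (2 + r)
  have hρ : 0 < ρ := by positivity
  have hρ2 : 1 / 2 < ρ := by rw [lt_div_iff₀ (by positivity)]; linarith
  have hρr : ρ * r < 1 := by rw [div_mul_eq_mul_div, div_lt_one (by positivity)]; linarith
  set ε : ℝ := ρ ^ 2 * (ρ - 1 / 2) / (ρ ^ 2 + ρ + 1)
  have hε : 0 < ε := div_pos (mul_pos (by positivity) (by linarith)) (by positivity)
  -- `ε` is chosen so that `ρ` is exactly a root of `x³ = (1/2 + ε) x² + ε x + ε`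
  have hchar : (1 / 2 + ε) / ρ + ε / ρ ^ 2 + ε / ρ ^ 3 = 1 := by
    simp only [ε]; field_simp; ring
  obtain ⟨C, hC⟩ := exists_le_of_eventually_le_three_term (b := fun n => |a n| / ρ ^ n)
    (by positivity) (by positivity) (by positivity) hchar.le
    ((eventually_abs_le_of_heun_recurrence hrec hε).mono fun n hn => by
      calc |a (n + 3)| / ρ ^ (n + 3)
          ≤ ((1 / 2 + ε) * |a (n + 2)| + ε * |a (n + 1)| + ε * |a n|) / ρ ^ (n + 3) := by gcongr
        _ = _ := by field_simp; ring)
  refine .of_nonneg_of_le (fun n => by positivity) (fun n => ?_)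
    ((summable_geometric_of_lt_one (by positivity) hρr).mul_left C)
  have hn : |a n| ≤ C * ρ ^ n := (div_le_iff₀ (by positivity)).1 (hC n)
  calc |a n| * r ^ n ≤ C * ρ ^ n * r ^ n := by gcongr
    _ = C * (ρ * r) ^ n := by ring

end HeunRecurrence

section FormalDerivative

variable {R : Type*} [CommRing R]

theorem coeff_X_mul_derivative (F : R⟦X⟧) (n : ℕ) : coeff n (X * d⁄dX R F) = n * coeff n F := by
  rcases n with _ | n
  · simp
  · rw [coeff_succ_X_mul, coeff_derivative, mul_comm]
    push_cast; rfl

theorem coeff_X_sq_mul_derivative_derivative (F : R⟦X⟧) (n : ℕ) :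
    coeff n (X ^ 2 * d⁄dX R (d⁄dX R F)) = n * (n - 1) * coeff n F := by
  rcases n with _ | _ | n
  · simp
  · simp [pow_two, mul_assoc, coeff_succ_X_mul]
  · rw [pow_two, mul_assoc, coeff_succ_X_mul, coeff_succ_X_mul, coeff_derivative, coeff_derivative]
    push_cast
    ring

end FormalDerivative

section RealPowerSeries

/-- `R` is at most the radius of convergence of `p`. -/
def AbsConvergentBelow (p : ℝ⟦X⟧) (R : ℝ) : Prop :=
  ∀ r, 0 ≤ r → r < R → Summable fun n => |coeff n p| * r ^ n

noncomputable def seriesFun (p : ℝ⟦X⟧) (x : ℝ) : ℝ := ∑' n, coeff n p * x ^ n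

theorem seriesFun_zero (p : ℝ⟦X⟧) : seriesFun p 0 = coeff 0 p := by
  rw [seriesFun, tsum_eq_single 0 fun n hn => by simp [hn]]
  simp

variable {p : ℝ⟦X⟧} {R x : ℝ}

theorem AbsConvergentBelow.derivative (hp : AbsConvergentBelow p R) :
    AbsConvergentBelow (d⁄dX ℝ p) R := by
  intro r hr0 hrR
  set s := (r + R) / 2
  have hs : 0 < s := by simp only [s]; linarith
  set q := r / s
  have hq0 : 0 ≤ q := by positivity
  have hq1 : q < 1 := (div_lt_one hs).2 (by simp only [s]; linarith)
  have hlim : Tendsto (fun n : ℕ => ((n : ℝ) + 1) * q ^ n) atTop (𝓝 0) := by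
    simpa [add_mul] using (tendsto_self_mul_const_pow_of_lt_one hq0 hq1).add
      (tendsto_pow_atTop_nhds_zero_of_lt_one hq0 hq1)
  refine .of_norm_bounded_eventually_nat
    ((summable_nat_add_iff 1).2 (hp s hs.le (by simp only [s]; linarith))) ?_
  filter_upwards [hlim.eventually (eventually_le_nhds hs)] with n hn
  have hr : r ^ n = s ^ n * q ^ n := by rw [← mul_pow, mul_div_cancel₀ _ hs.ne']
  rw [Real.norm_of_nonneg (by positivity), coeff_derivative, abs_mul,
    abs_of_nonneg (by positivity : (0 : ℝ) ≤ (n : ℝ) + 1), hr, pow_succ]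
  calc |coeff (n + 1) p| * ((n : ℝ) + 1) * (s ^ n * q ^ n)
      = |coeff (n + 1) p| * s ^ n * (((n : ℝ) + 1) * q ^ n) := by ring
    _ ≤ |coeff (n + 1) p| * s ^ n * s := by gcongr
    _ = |coeff (n + 1) p| * (s ^ n * s) := by ring

theorem AbsConvergentBelow.hasSum (hp : AbsConvergentBelow p R) (hx : |x| < R) :
    HasSum (fun n => coeff n p * x ^ n) (seriesFun p x) :=
  (Summable.of_norm_bounded (hp |x| (abs_nonneg x) hx) fun n => by
    rw [Real.norm_eq_abs, abs_mul, abs_pow]).hasSum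

theorem AbsConvergentBelow.hasDerivAt (hp : AbsConvergentBelow p R) (hx : |x| < R) :
    HasDerivAt (seriesFun p) (seriesFun (d⁄dX ℝ p) x) x := by
  set r := (|x| + R) / 2
  have hxr : |x| < r := by simp only [r]; linarith
  have hr0 : 0 ≤ r := (abs_nonneg x).trans hxr.le
  have hbound : Summable fun n => |coeff n p| * n * r ^ (n - 1) := by
    refine (summable_nat_add_iff 1).1 ((hp.derivative r hr0 (by simp only [r]; linarith)).congr
      fun n => ?_)
    rw [coeff_derivative, abs_mul, abs_of_nonneg (by positivity : (0 : ℝ) ≤ (n : ℝ) + 1)]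
    push_cast
    simp
  have hderiv := hasDerivAt_tsum_of_isPreconnected hbound isOpen_Ioo isPreconnected_Ioo
    (g := fun n y => coeff n p * y ^ n) (g' := fun n y => coeff n p * (n * y ^ (n - 1)))
    (fun n y _ => (hasDerivAt_pow n y).const_mul _)
    (fun n y hy => by
      rw [Real.norm_eq_abs, abs_mul, abs_mul, Nat.abs_cast, abs_pow, ← mul_assoc]
      gcongr
      exact abs_le.2 ⟨hy.1.le, hy.2.le⟩)
    (abs_lt.1 hxr) (hp.hasSum hx).summable (abs_lt.1 hxr)
  refine hderiv.congr_deriv (HasSum.tsum_eq ?_)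
  rw [← hasSum_nat_add_iff' 1]
  simpa [coeff_derivative, mul_comm, mul_left_comm, mul_assoc] using hp.derivative.hasSum hx

theorem AbsConvergentBelow.hasDerivAt_deriv (hp : AbsConvergentBelow p R) (hx : |x| < R) :
    HasDerivAt (deriv (seriesFun p)) (seriesFun (d⁄dX ℝ (d⁄dX ℝ p)) x) x := by
  have hball : ∀ᶠ y in 𝓝 x, |y| < R := (continuous_abs.tendsto x).eventually (gt_mem_nhds hx)
  exact (hp.derivative.hasDerivAt hx).congr_of_eventuallyEq
    (hball.mono fun y hy => (hp.hasDerivAt hy).deriv)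

theorem hasSum_coeff_X_pow_mul {s : ℝ} (h : HasSum (fun n => coeff n p * x ^ n) s)
    (k : ℕ) : HasSum (fun n => coeff n (X ^ k * p) * x ^ n) (x ^ k * s) := by
  rw [← hasSum_nat_add_iff' k, sum_eq_zero fun i hi => by
    simp [coeff_X_pow_mul', (mem_range.1 hi).not_ge], sub_zero]
  have hshift : (fun n => coeff (n + k) (X ^ k * p) * x ^ (n + k)) =
      fun n => x ^ k * (coeff n p * x ^ n) := by
    ext n
    rw [coeff_X_pow_mul', if_pos (Nat.le_add_left k n), Nat.add_sub_cancel, pow_add]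
    ring
  rw [hshift]
  exact h.mul_left _

theorem hasSum_coeff_polynomial_mul {s : ℝ}
    (h : HasSum (fun n => coeff n p * x ^ n) s) (q : Polynomial ℝ) :
    HasSum (fun n => coeff n ((q : ℝ⟦X⟧) * p) * x ^ n) (q.eval x * s) := by
  induction q using Polynomial.induction_on' with
  | add q₁ q₂ h₁ h₂ => simpa [add_mul] using h₁.add h₂
  | monomial k a =>
    have hmon : monomial k a = C a * (X : ℝ⟦X⟧) ^ k := by
      rw [X_pow_eq, ← monomial_zero_eq_C_apply, monomial_mul_monomial, zero_add, mul_one]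
    simpa [Polynomial.coe_monomial, hmon, mul_assoc] using (hasSum_coeff_X_pow_mul h k).mul_left a

theorem AbsConvergentBelow.ode_of_formal_ode (hp : AbsConvergentBelow p R)
    {q₀ q₁ q₂ : Polynomial ℝ}
    (hode : (q₂ : ℝ⟦X⟧) * d⁄dX ℝ (d⁄dX ℝ p) + (q₁ : ℝ⟦X⟧) * d⁄dX ℝ p + (q₀ : ℝ⟦X⟧) * p = 0)
    (hx : |x| < R) :
    q₂.eval x * deriv (deriv (seriesFun p)) x + q₁.eval x * deriv (seriesFun p) x
      + q₀.eval x * seriesFun p x = 0 := by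
  have h₂ := hasSum_coeff_polynomial_mul (hp.derivative.derivative.hasSum hx) q₂
  have h₁ := hasSum_coeff_polynomial_mul (hp.derivative.hasSum hx) q₁
  have h₀ := hasSum_coeff_polynomial_mul (hp.hasSum hx) q₀
  rw [(hp.hasDerivAt_deriv hx).deriv, (hp.hasDerivAt hx).deriv]
  refine ((h₂.add h₁).add h₀).unique ?_
  simp [← add_mul, ← map_add, hode, hasSum_zero]

end RealPowerSeries

noncomputable def egf (u : ℕ → ℝ) : ℝ⟦X⟧ := mk fun n => u n / n.factorial

theorem coeff_egf (u : ℕ → ℝ) (n : ℕ) : coeff n (egf u) = u n / n.factorial := coeff_mk _ _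

theorem derivative_egf (u : ℕ → ℝ) : d⁄dX ℝ (egf u) = egf fun n => u (n + 1) := by
  ext n
  rw [coeff_derivative, coeff_egf, coeff_egf, Nat.factorial_succ]
  push_cast
  field_simp

theorem coeff_X_mul_egf (u : ℕ → ℝ) (n : ℕ) :
    coeff n (X * egf u) = n * u (n - 1) / n.factorial := by
  rcases n with _ | n
  · simp
  · rw [coeff_succ_X_mul, coeff_egf, Nat.factorial_succ, Nat.add_sub_cancel]
    push_cast
    field_simp

theorem coeff_X_sq_mul_egf (u : ℕ → ℝ) (n : ℕ) :
    coeff n (X ^ 2 * egf u) = n * (n - 1) * u (n - 2) / n.factorial := by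
  rcases n with _ | _ | n
  · simp
  · simp [pow_two, mul_assoc, coeff_succ_X_mul]
  · rw [pow_two, mul_assoc, coeff_succ_X_mul, coeff_succ_X_mul, coeff_egf, Nat.factorial_succ,
      Nat.factorial_succ, show n + 1 + 1 - 2 = n by omega]
    push_cast
    field_simp
    ring

section HeunEGF

variable {c l : ℝ} {u : ℕ → ℝ}
  (hurec : ∀ k : ℕ,
      u (k + 1) =
        ((l + c ^ 2 + (k : ℝ) * ((k : ℝ) + 1)) * u k
          - 2 * c ^ 2 * (k : ℝ) * u (k - 1)
          + c ^ 2 * (k : ℝ) * ((k : ℝ) - 1) * u (k - 2)) / (2 * ((k : ℝ) + 1)))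
include hurec

theorem coeff_egf_heun_recurrence (n : ℕ) :
    2 * ((n : ℝ) + 3) ^ 2 * coeff (n + 3) (egf u) =
      (((n : ℝ) + 2) * ((n : ℝ) + 3) + c ^ 2 + l) * coeff (n + 2) (egf u)
        - 2 * c ^ 2 * coeff (n + 1) (egf u) + c ^ 2 * coeff n (egf u) := by
  simp only [coeff_egf, hurec (n + 2), show n + 2 - 1 = n + 1 by omega, Nat.add_sub_cancel,
    Nat.factorial_succ]
  push_cast
  field_simp
  ring

/-- In the variable `x = y + 1` the confluent Heun operator reads
`(1 - (x-1)²) d² - 2 (x-1) d - (c² (x-1)² + l)`. -/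
theorem egf_heun_ode :
    ((1 - (Polynomial.X - 1) ^ 2 : Polynomial ℝ) : ℝ⟦X⟧) * d⁄dX ℝ (d⁄dX ℝ (egf u))
      + ((-(Polynomial.C 2 * (Polynomial.X - 1)) : Polynomial ℝ) : ℝ⟦X⟧) * d⁄dX ℝ (egf u)
      + ((-(Polynomial.C (c ^ 2) * (Polynomial.X - 1) ^ 2 + Polynomial.C l) : Polynomial ℝ) : ℝ⟦X⟧)
        * egf u = 0 := by
  convert_to C 2 * (X * d⁄dX ℝ (d⁄dX ℝ (egf u))) - X ^ 2 * d⁄dX ℝ (d⁄dX ℝ (egf u))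
      + C 2 * d⁄dX ℝ (egf u) - C 2 * (X * d⁄dX ℝ (egf u)) - C (c ^ 2) * (X ^ 2 * egf u)
      + C (2 * c ^ 2) * (X * egf u) - C (c ^ 2) * egf u - C l * egf u = 0 using 1
  · simp only [Polynomial.coe_add, Polynomial.coe_sub, Polynomial.coe_neg, Polynomial.coe_mul,
      Polynomial.coe_pow, Polynomial.coe_one, Polynomial.coe_X, Polynomial.coe_C]
    simp only [map_mul, map_ofNat]
    ring
  ext n
  have hfact : (n.factorial : ℝ) ≠ 0 := by positivity
  rw [map_zero, ← mul_right_inj' hfact, mul_zero]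
  simp only [map_add, map_sub, coeff_C_mul, coeff_X_mul_derivative,
    coeff_X_sq_mul_derivative_derivative]
  simp only [derivative_egf, coeff_egf, coeff_X_mul_egf, coeff_X_sq_mul_egf]
  rw [hurec n]
  field_simp
  ring

theorem absConvergentBelow_egf : AbsConvergentBelow (egf u) 2 := fun _ hr0 hr =>
  summable_abs_mul_pow_of_heun_recurrence (coeff_egf_heun_recurrence hurec) hr0 hr

end HeunEGF

theorem stmt6_general (c l : ℝ)
    (u : ℕ → ℝ) (hu0 : u 0 = 1)
    (hurec : ∀ k : ℕ,
      u (k + 1) =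
        ((l + c ^ 2 + (k : ℝ) * ((k : ℝ) + 1)) * u k
          - 2 * c ^ 2 * (k : ℝ) * u (k - 1)
          + c ^ 2 * (k : ℝ) * ((k : ℝ) - 1) * u (k - 2)) / (2 * ((k : ℝ) + 1)))
    (W : ℝ → ℝ)
    (hW : ∀ y : ℝ, W y = ∑' k : ℕ, (y + 1) ^ k * u k / (k.factorial : ℝ)) :
    (∀ y ∈ Ioo (-3 : ℝ) 1,
        Summable (fun k : ℕ => (y + 1) ^ k * u k / (k.factorial : ℝ))) ∧
    W (-1) = 1 ∧
    (∀ y ∈ Ioo (-3 : ℝ) 1,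
        DifferentiableAt ℝ W y ∧ DifferentiableAt ℝ (deriv W) y ∧
        (1 - y ^ 2) * deriv (deriv W) y - 2 * y * deriv W y
          - c ^ 2 * y ^ 2 * W y - l * W y = 0) := by
  have hconv := absConvergentBelow_egf hurec
  have hterm : ∀ y k, (y + 1) ^ k * u k / (k.factorial : ℝ) = coeff k (egf u) * (y + 1) ^ k :=
    fun y k => by rw [coeff_egf]; ring
  have hWf : W = fun y => seriesFun (egf u) (y + 1) := funext fun y => by
    rw [hW, seriesFun]; exact tsum_congr (hterm y)
  have hball : ∀ y ∈ Ioo (-3 : ℝ) 1, |y + 1| < 2 := fun y hy =>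
    abs_lt.2 ⟨by linarith [hy.1], by linarith [hy.2]⟩
  have hderivW : deriv W = fun y => deriv (seriesFun (egf u)) (y + 1) := by
    rw [hWf]; exact funext fun y => deriv_comp_add_const ..
  refine ⟨fun y hy => ?_, ?_, fun y hy => ⟨?_, ?_, ?_⟩⟩
  · simpa only [hterm] using (hconv.hasSum (hball y hy)).summable
  · simp [hWf, seriesFun_zero, coeff_egf, hu0]
  · rw [hWf]; exact ((hconv.hasDerivAt (hball y hy)).comp_add_const y 1).differentiableAt
  · rw [hderivW]; exact ((hconv.hasDerivAt_deriv (hball y hy)).comp_add_const y 1).differentiableAt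
  · have hode := hconv.ode_of_formal_ode (egf_heun_ode hurec) (hball y hy)
    rw [hderivW, hWf, deriv_comp_add_const]
    simp only [Polynomial.eval_sub, Polynomial.eval_add, Polynomial.eval_neg, Polynomial.eval_mul,
      Polynomial.eval_pow, Polynomial.eval_one, Polynomial.eval_X, Polynomial.eval_C,
      add_sub_cancel_right] at hode
    linear_combination hode

/-- Corollary 2: the function `W(y) = Σ_k (y+1)^k u_k/k!` is well defined on
`(−3,1)`, is twice differentiable there, satisfies `W(−1) = 1` and solves the confluent Heun
equation `(1−y²)W'' − 2yW' − c²y²W − λW = 0` on `(−3,1)`. -/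
theorem stmt6 (c l : ℝ) (hc : 0 ≤ c)
    (u : ℕ → ℝ) (hu0 : u 0 = 1)
    (hurec : ∀ k : ℕ,
      u (k + 1) =
        ((l + c ^ 2 + (k : ℝ) * ((k : ℝ) + 1)) * u k
          - 2 * c ^ 2 * (k : ℝ) * u (k - 1)
          + c ^ 2 * (k : ℝ) * ((k : ℝ) - 1) * u (k - 2)) / (2 * ((k : ℝ) + 1)))
    (W : ℝ → ℝ)
    (hW : ∀ y : ℝ, W y = ∑' k : ℕ, (y + 1) ^ k * u k / (k.factorial : ℝ)) :
    (∀ y ∈ Ioo (-3 : ℝ) 1,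
        Summable (fun k : ℕ => (y + 1) ^ k * u k / (k.factorial : ℝ))) ∧
    W (-1) = 1 ∧
    (∀ y ∈ Ioo (-3 : ℝ) 1,
        DifferentiableAt ℝ W y ∧ DifferentiableAt ℝ (deriv W) y ∧
        (1 - y ^ 2) * deriv (deriv W) y - 2 * y * deriv W y
          - c ^ 2 * y ^ 2 * W y - l * W y = 0) :=
  stmt6_general c l u hu0 hurec W hW
end

section
/- Let c ≥ 0 and χ ∈ ℝ, and let ψ : ℝ → ℂ be C^∞ on (−3, 1), satisfying (1−y²)ψ''(y) − 2y ψ'(y) − c² y² ψ(y) = −χ ψ(y) for all y ∈ (−3, 1), with ψ(−1) ≠ 0. Assume that for every ξ ∈ (−2, 2) the Taylor series of ψ at −1 converges to ψ(−1+ξ), i.e. Σ_{k≥0} ξ^k ψ^{(k)}(−1)/k! has sum ψ(−1+ξ). Define the real sequence (u_k)_{k≥0} by u_0 = 1 and, for k ≥ 0, u_{k+1} = ( (−χ + c² + k(k+1)) u_k − 2c²k u_{k−1} + c²k(k−1) u_{k−2} ) / (2(k+1)), with u_j = 0 for j < 0. Then for every ξ ∈ (−2, 2), the series Σ_{k≥0}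 ξ^k u_k / k! has sum ψ(−1+ξ)/ψ(−1). -/
open Set

private lemma hderiv_aux (ψ : ℝ → ℂ) (hψ : ContDiffOn ℝ (⊤ : ℕ∞) ψ (Ioo (-3 : ℝ) 1)) :
    ∀ (j : ℕ), ∀ y ∈ Ioo (-3 : ℝ) 1,
      HasDerivAt (iteratedDeriv j ψ) (iteratedDeriv (j + 1) ψ y) y := by
  intro j y hy
  have hEq : ∀ x ∈ Ioo (-3 : ℝ) 1,
      iteratedDerivWithin j ψ (Ioo (-3 : ℝ) 1) x = iteratedDeriv j ψ x := by
    intro x hx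
    simp only [iteratedDerivWithin, iteratedDeriv,
      iteratedFDerivWithin_of_isOpen j isOpen_Ioo hx]
  have hdo : DifferentiableOn ℝ (iteratedDerivWithin j ψ (Ioo (-3 : ℝ) 1)) (Ioo (-3 : ℝ) 1) :=
    hψ.differentiableOn_iteratedDerivWithin (by exact_mod_cast lt_top_iff_ne_top.2 (by simp))
      isOpen_Ioo.uniqueDiffOn
  have h1 : DifferentiableWithinAt ℝ (iteratedDeriv j ψ) (Ioo (-3 : ℝ) 1) y :=
    (hdo y hy).congr (fun x hx => (hEq x hx).symm) (hEq y hy).symm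
  have hda : DifferentiableAt ℝ (iteratedDeriv j ψ) y :=
    h1.differentiableAt (isOpen_Ioo.mem_nhds hy)
  rw [iteratedDeriv_succ]
  exact hda.hasDerivAt

private lemma step_aux (g : ℕ → ℝ → ℂ)
    (hg : ∀ j, ∀ y ∈ Ioo (-3 : ℝ) 1, HasDerivAt (g j) (g (j + 1) y) y)
    (A B C D E : ℕ) (b1 b2 c0 c2 d1 e0 : ℂ)
    (h : ∀ y ∈ Ioo (-3 : ℝ) 1,
      (1 - (y : ℂ) ^ 2) * g A y + (b1 + b2 * y) * g B y + (c0 + c2 * (y : ℂ) ^ 2) * g C y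
        + d1 * y * g D y + e0 * g E y = 0) :
    ∀ y ∈ Ioo (-3 : ℝ) 1,
      (-2 * (y : ℂ)) * g A y + (1 - (y : ℂ) ^ 2) * g (A + 1) y
        + b2 * g B y + (b1 + b2 * y) * g (B + 1) y
        + 2 * c2 * y * g C y + (c0 + c2 * (y : ℂ) ^ 2) * g (C + 1) y
        + d1 * g D y + d1 * y * g (D + 1) y
        + e0 * g (E + 1) y = 0 := by
  intro y hy
  have hid : HasDerivAt (fun t : ℝ => (t : ℂ)) 1 y := by
    simpa using (hasDerivAt_id y).ofReal_comp
  have hsq : HasDerivAt (fun t : ℝ => (t : ℂ) ^ 2) (2 * (y : ℂ)) y := by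
    simp only [pow_two]
    have : HasDerivAt (fun t : ℝ => (t : ℂ) * (t : ℂ)) (1 * (y : ℂ) + (y : ℂ) * 1) y :=
      hid.mul hid
    convert this using 1
    ring
  have h1 : HasDerivAt (fun t : ℝ => 1 - (t : ℂ) ^ 2) (-(2 * (y : ℂ))) y := hsq.const_sub 1
  have h2 : HasDerivAt (fun t : ℝ => b1 + b2 * (t : ℂ)) b2 y := by
    simpa using (hid.const_mul b2).const_add b1
  have h3 : HasDerivAt (fun t : ℝ => c0 + c2 * (t : ℂ) ^ 2) (c2 * (2 * (y : ℂ))) y := by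
    simpa using (hsq.const_mul c2).const_add c0
  have h4 : HasDerivAt (fun t : ℝ => d1 * (t : ℂ)) d1 y := by
    simpa using hid.const_mul d1
  have hev : (fun t : ℝ => (1 - (t : ℂ) ^ 2) * g A t + (b1 + b2 * t) * g B t
      + (c0 + c2 * (t : ℂ) ^ 2) * g C t + d1 * t * g D t + e0 * g E t)
      =ᶠ[nhds y] (fun _ => (0 : ℂ)) :=
    Filter.eventuallyEq_of_mem (isOpen_Ioo.mem_nhds hy) (fun x hx => h x hx)
  have hF : HasDerivAt (fun t : ℝ => (1 - (t : ℂ) ^ 2) * g A t + (b1 + b2 * t) * g B t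
      + (c0 + c2 * (t : ℂ) ^ 2) * g C t + d1 * t * g D t + e0 * g E t) _ y :=
    ((((h1.mul (hg A y hy)).add (h2.mul (hg B y hy))).add (h3.mul (hg C y hy))).add
      (h4.mul (hg D y hy))).add ((hg E y hy).const_mul e0)
  have hval := hF.deriv.symm.trans (hev.deriv_eq.trans (deriv_const y (0 : ℂ)))
  linear_combination hval

private lemma base_aux (c χ : ℝ) (ψ : ℝ → ℂ)
    (hode : ∀ y ∈ Ioo (-3 : ℝ) 1,
      (1 - (y : ℂ) ^ 2) * iteratedDeriv 2 ψ y - 2 * (y : ℂ) * deriv ψ y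
        - (c : ℂ) ^ 2 * (y : ℂ) ^ 2 * ψ y = -(χ : ℂ) * ψ y) :
    ∀ y ∈ Ioo (-3 : ℝ) 1,
      (1 - (y : ℂ) ^ 2) * iteratedDeriv 2 ψ y
        + ((0 : ℂ) + (-2) * y) * iteratedDeriv 1 ψ y
        + ((χ : ℂ) + (-(c : ℂ) ^ 2) * (y : ℂ) ^ 2) * iteratedDeriv 0 ψ y
        + (0 : ℂ) * y * iteratedDeriv 0 ψ y + (0 : ℂ) * iteratedDeriv 0 ψ y = 0 := by
  intro y hy
  have h := hode y hy
  simp only [iteratedDeriv_one, iteratedDeriv_zero]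
  linear_combination h

private lemma keyQ (c χ : ℝ) (ψ : ℝ → ℂ) (hψ : ContDiffOn ℝ (⊤ : ℕ∞) ψ (Ioo (-3 : ℝ) 1))
    (hode : ∀ y ∈ Ioo (-3 : ℝ) 1,
      (1 - (y : ℂ) ^ 2) * iteratedDeriv 2 ψ y - 2 * (y : ℂ) * deriv ψ y
        - (c : ℂ) ^ 2 * (y : ℂ) ^ 2 * ψ y = -(χ : ℂ) * ψ y) :
    ∀ m : ℕ, ∀ y ∈ Ioo (-3 : ℝ) 1,
      (1 - (y : ℂ) ^ 2) * iteratedDeriv (m + 4) ψ y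
        + ((0 : ℂ) + (-2 * ((m : ℂ) + 3)) * y) * iteratedDeriv (m + 3) ψ y
        + (((χ : ℂ) - ((m : ℂ) + 2) * ((m : ℂ) + 3)) + (-(c : ℂ) ^ 2) * (y : ℂ) ^ 2)
            * iteratedDeriv (m + 2) ψ y
        + (-2 * (c : ℂ) ^ 2 * ((m : ℂ) + 2)) * y * iteratedDeriv (m + 1) ψ y
        + (-(c : ℂ) ^ 2 * ((m : ℂ) + 2) * ((m : ℂ) + 1)) * iteratedDeriv m ψ y = 0 := by
  have hg := hderiv_aux ψ hψ
  have h0 := base_aux c χ ψ hode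
  have h1 := step_aux _ hg 2 1 0 0 0 0 (-2) (χ : ℂ) (-(c : ℂ) ^ 2) 0 0 h0
  have h1' : ∀ y ∈ Ioo (-3 : ℝ) 1,
      (1 - (y : ℂ) ^ 2) * iteratedDeriv 3 ψ y
        + ((0 : ℂ) + (-4) * y) * iteratedDeriv 2 ψ y
        + (((χ : ℂ) - 2) + (-(c : ℂ) ^ 2) * (y : ℂ) ^ 2) * iteratedDeriv 1 ψ y
        + (-2 * (c : ℂ) ^ 2) * y * iteratedDeriv 0 ψ y
        + (0 : ℂ) * iteratedDeriv 0 ψ y = 0 := by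
    intro y hy
    have := h1 y hy
    norm_num at this ⊢
    linear_combination this
  intro m
  induction m with
  | zero =>
    have h2 := step_aux _ hg 3 2 1 0 0 0 (-4) ((χ : ℂ) - 2) (-(c : ℂ) ^ 2)
      (-2 * (c : ℂ) ^ 2) 0 h1'
    intro y hy
    have := h2 y hy
    norm_num at this ⊢
    linear_combination this
  | succ n ih =>
    have h2 := step_aux _ hg (n + 4) (n + 3) (n + 2) (n + 1) n 0 (-2 * ((n : ℂ) + 3))
      ((χ : ℂ) - ((n : ℂ) + 2) * ((n : ℂ) + 3)) (-(c : ℂ) ^ 2)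
      (-2 * (c : ℂ) ^ 2 * ((n : ℂ) + 2)) (-(c : ℂ) ^ 2 * ((n : ℂ) + 2) * ((n : ℂ) + 1)) ih
    intro y hy
    have := h2 y hy
    simp only [show n + 4 + 1 = n + 1 + 4 from rfl, show n + 3 + 1 = n + 1 + 3 from rfl,
      show n + 2 + 1 = n + 1 + 2 from rfl] at this
    push_cast
    linear_combination this

/-- for an eigenfunction `ψ` of the confluent Heun operator with eigenvalue `−χ`
whose Taylor series at `−1` converges on `(−3,1)`, the series `Σ_k ξ^k u_k/k!` (with
`u_k = U_k(−χ)`) sums to `ψ(−1+ξ)/ψ(−1)` for `ξ ∈ (−2,2)`. -/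
theorem stmt7 (c χ : ℝ) (hc : 0 ≤ c)
    (ψ : ℝ → ℂ) (hψ : ContDiffOn ℝ (⊤ : ℕ∞) ψ (Ioo (-3 : ℝ) 1))
    (hode : ∀ y ∈ Ioo (-3 : ℝ) 1,
      (1 - (y : ℂ) ^ 2) * iteratedDeriv 2 ψ y - 2 * (y : ℂ) * deriv ψ y
        - (c : ℂ) ^ 2 * (y : ℂ) ^ 2 * ψ y = -(χ : ℂ) * ψ y)
    (hne : ψ (-1) ≠ 0)
    (hTaylor : ∀ ξ ∈ Ioo (-2 : ℝ) 2,
      HasSum (fun k : ℕ => (ξ : ℂ) ^ k * iteratedDeriv k ψ (-1) / (k.factorial : ℂ))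
        (ψ (-1 + ξ)))
    (u : ℕ → ℝ) (hu0 : u 0 = 1)
    (hurec : ∀ k : ℕ,
      u (k + 1) =
        ((-χ + c ^ 2 + (k : ℝ) * ((k : ℝ) + 1)) * u k
          - 2 * c ^ 2 * (k : ℝ) * u (k - 1)
          + c ^ 2 * (k : ℝ) * ((k : ℝ) - 1) * u (k - 2)) / (2 * ((k : ℝ) + 1))) :
    ∀ ξ ∈ Ioo (-2 : ℝ) 2,
      HasSum (fun k : ℕ => ((ξ ^ k * u k / (k.factorial : ℝ) : ℝ) : ℂ))
        (ψ (-1 + ξ) / ψ (-1)) := by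
  have hm1 : (-1 : ℝ) ∈ Ioo (-3 : ℝ) 1 := by norm_num
  set d : ℕ → ℂ := fun k => iteratedDeriv k ψ (-1) with hd
  -- the recurrence for the derivatives at -1
  have hg := hderiv_aux ψ hψ
  have h0 := base_aux c χ ψ hode
  have h1 := step_aux _ hg 2 1 0 0 0 0 (-2) (χ : ℂ) (-(c : ℂ) ^ 2) 0 0 h0
  have hQ := keyQ c χ ψ hψ hode
  have hrec : ∀ k : ℕ, 2 * ((k : ℂ) + 1) * d (k + 1) =
      (-(χ : ℂ) + (c : ℂ) ^ 2 + (k : ℂ) * ((k : ℂ) + 1)) * d k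
        - 2 * (c : ℂ) ^ 2 * (k : ℂ) * d (k - 1)
        + (c : ℂ) ^ 2 * (k : ℂ) * ((k : ℂ) - 1) * d (k - 2) := by
    intro k
    match k with
    | 0 =>
      have := h0 (-1) hm1
      simp only [show (0:ℕ)+1 = 1 from rfl, show (0:ℕ)-1 = 0 from rfl,
        show (0:ℕ)-2 = 0 from rfl, hd, iteratedDeriv_zero, iteratedDeriv_one] at this ⊢
      push_cast at this ⊢
      linear_combination this
    | 1 =>
      have := h1 (-1) hm1
      simp only [show (2:ℕ)+1 = 3 from rfl, show (1:ℕ)+1 = 2 from rfl,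
        show (0:ℕ)+1 = 1 from rfl, show (1:ℕ)-1 = 0 from rfl, show (1:ℕ)-2 = 0 from rfl,
        hd, iteratedDeriv_zero, iteratedDeriv_one] at this ⊢
      push_cast at this ⊢
      linear_combination this
    | (m + 2) =>
      have := hQ m (-1) hm1
      simp only [show m + 2 - 1 = m + 1 from rfl, show m + 2 - 2 = m from rfl,
        show m + 2 + 1 = m + 3 from rfl, hd]
      push_cast at this ⊢
      linear_combination this
  -- u k equals the normalized derivatives
  have hud : ∀ k : ℕ, (u k : ℂ) * ψ (-1) = d k := by
    intro k
    induction k using Nat.strong_induction_on with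
    | _ k ih =>
      match k with
      | 0 => simp [hu0, hd, iteratedDeriv_zero]
      | (k + 1) =>
        have hk := ih k (by omega)
        have hk1 := ih (k - 1) (by omega)
        have hk2 := ih (k - 2) (by omega)
        have hne2 : (2 * ((k : ℝ) + 1)) ≠ 0 := by positivity
        have hr0 : u (k + 1) * (2 * ((k : ℝ) + 1)) =
            (-χ + c ^ 2 + (k : ℝ) * ((k : ℝ) + 1)) * u k
              - 2 * c ^ 2 * (k : ℝ) * u (k - 1)
              + c ^ 2 * (k : ℝ) * ((k : ℝ) - 1) * u (k - 2) := by
          rw [hurec k, div_mul_cancel₀ _ hne2]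
        have hr0C := congrArg (fun t : ℝ => (t : ℂ)) hr0
        push_cast at hr0C
        have hne2C : (2 * ((k : ℂ) + 1)) ≠ 0 := by
          have : ((2 * ((k : ℝ) + 1) : ℝ) : ℂ) ≠ 0 := by exact_mod_cast hne2
          push_cast at this
          exact this
        have hmain : 2 * ((k : ℂ) + 1) * ((u (k + 1) : ℂ) * ψ (-1)) =
            2 * ((k : ℂ) + 1) * d (k + 1) := by
          rw [hrec k, ← hk, ← hk1, ← hk2]
          linear_combination ψ (-1) * hr0C
        exact mul_left_cancel₀ hne2C hmain
  -- conclude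
  intro ξ hξ
  have hT := (hTaylor ξ hξ).div_const (ψ (-1))
  have hfun : (fun k : ℕ => ((ξ ^ k * u k / (k.factorial : ℝ) : ℝ) : ℂ)) =
      fun k : ℕ => (ξ : ℂ) ^ k * iteratedDeriv k ψ (-1) / (k.factorial : ℂ) / ψ (-1) := by
    funext k
    have hfac : ((k.factorial : ℝ) : ℂ) ≠ 0 := by
      exact_mod_cast Nat.cast_ne_zero.2 k.factorial_ne_zero
    have := hud k
    simp only [hd] at this
    push_cast
    rw [← this]
    rw [div_div, ← mul_assoc]
    exact (mul_div_mul_right _ _ hne).symm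
  rw [hfun]
  exact hT
end

section
/- (Corollary to Theorem 3, eigenfunction form with reflection) Let c > 0, χ ∈ ℝ, μ ∈ ℂ, ε ∈ {1, −1}, and let ψ : ℝ → ℂ be C^∞ on (−3, 1), satisfying (1−y²)ψ''(y) − 2y ψ'(y) − c² y² ψ(y) = −χ ψ(y) for all y ∈ (−3, 1), with ψ(−1) ≠ 0, such that for every ξ ∈ (−2, 2) the series Σ_{k≥0} ξ^k ψ^{(k)}(−1)/k! has sum ψ(−1+ξ), and with parity ψ(−x) = ε ψ(x) for all x ∈ [−1, 1]. Assume that for all x ∈ [−1, 1], ∫_{−1}^{1} e^{icxt} ψ(t) dt = μ ψ(x). Define (u_k)_{k≥0} by u_0 = 1 and, for k ≥ 0, u_{k+1} = ( (−χ + c² + k(k+1)) u_k − 2c²k u_{k−1} + c²k(k−1) u_{k−2} ) / (2(k+1)), with u_j = 0 for j < 0. Then μ = ∫_{0}^{1} ( e^{ic(1−ξ)} + ε e^{−ic(1−ξ)} ) ( Σ_{k≥0} ξ^k u_k / k! ) dξ. -/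
open Set Complex

private lemma ofReal_hasDerivAt {y : ℝ} : HasDerivAt (fun x : ℝ => (x : ℂ)) 1 y := by
  simpa using (hasDerivAt_id y).ofReal_comp

private lemma smooth_chain {ψ : ℝ → ℂ} (hψ : ContDiffOn ℝ ((⊤:ℕ∞):WithTop ℕ∞) ψ (Ioo (-3:ℝ) 1)) :
    ∀ n : ℕ, ContDiffOn ℝ ((⊤:ℕ∞):WithTop ℕ∞) (iteratedDeriv n ψ) (Ioo (-3:ℝ) 1) := by
  intro n
  induction n with
  | zero => simpa [iteratedDeriv_zero] using hψ
  | succ n ih =>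
    have := ((contDiffOn_infty_iff_deriv_of_isOpen isOpen_Ioo).1 ih).2
    simpa [iteratedDeriv_succ] using this

private lemma hasDeriv_chain {ψ : ℝ → ℂ} (hψ : ContDiffOn ℝ ((⊤:ℕ∞):WithTop ℕ∞) ψ (Ioo (-3:ℝ) 1)) :
    ∀ (n : ℕ), ∀ y ∈ Ioo (-3:ℝ) 1,
      HasDerivAt (iteratedDeriv n ψ) (iteratedDeriv (n+1) ψ y) y := by
  intro n y hy
  have h1 : DifferentiableOn ℝ (iteratedDeriv n ψ) (Ioo (-3:ℝ) 1) :=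
    (smooth_chain hψ n).differentiableOn (by simp)
  have h2 : DifferentiableAt ℝ (iteratedDeriv n ψ) y :=
    (h1 y hy).differentiableAt (isOpen_Ioo.mem_nhds hy)
  simpa [iteratedDeriv_succ] using h2.hasDerivAt

private lemma cast_kill {ψ : ℝ → ℂ} (k : ℕ) (y : ℝ) :
    (k:ℂ) * iteratedDeriv (k-1+1) ψ y = (k:ℂ) * iteratedDeriv k ψ y := by
  cases k with
  | zero => simp
  | succ n => simp

private lemma cast_kill2 {ψ : ℝ → ℂ} (k : ℕ) (y : ℝ) :
    (k:ℂ) * ((k:ℂ)-1) * iteratedDeriv (k-2+1) ψ y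
      = (k:ℂ) * ((k:ℂ)-1) * iteratedDeriv (k-1) ψ y := by
  match k with
  | 0 => simp
  | 1 => norm_num
  | (n+2) =>
    have h1 : n+2-2+1 = n+1 := by omega
    have h2 : n+2-1 = n+1 := by omega
    rw [h1, h2]

private lemma Qrec {ψ : ℝ → ℂ} (c χ : ℝ)
    (hψ : ContDiffOn ℝ ((⊤:ℕ∞):WithTop ℕ∞) ψ (Ioo (-3:ℝ) 1))
    (hode : ∀ y ∈ Ioo (-3 : ℝ) 1,
      (1 - (y : ℂ) ^ 2) * iteratedDeriv 2 ψ y - 2 * (y : ℂ) * deriv ψ y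
        - (c : ℂ) ^ 2 * (y : ℂ) ^ 2 * ψ y = -(χ : ℂ) * ψ y) :
    ∀ (k : ℕ), ∀ y ∈ Ioo (-3:ℝ) 1,
      (1 - (y:ℂ)^2) * iteratedDeriv (k+2) ψ y
        - 2*((k:ℂ)+1)*(y:ℂ) * iteratedDeriv (k+1) ψ y
        + ((χ:ℂ) - (k:ℂ)*((k:ℂ)+1) - (c:ℂ)^2*(y:ℂ)^2) * iteratedDeriv k ψ y
        - 2*(c:ℂ)^2*(k:ℂ)*(y:ℂ) * iteratedDeriv (k-1) ψ y
        - (c:ℂ)^2*(k:ℂ)*((k:ℂ)-1) * iteratedDeriv (k-2) ψ y = 0 := by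
  intro k
  induction k with
  | zero =>
    intro y hy
    have h := hode y hy
    rw [← iteratedDeriv_one] at h
    simp only [iteratedDeriv_zero] at h ⊢
    push_cast
    linear_combination h
  | succ k ih =>
    intro y hy
    have hFzero : ∀ x ∈ Ioo (-3:ℝ) 1,
        (fun x : ℝ =>
          (1 - (x:ℂ)^2) * iteratedDeriv (k+2) ψ x
            - 2*((k:ℂ)+1)*(x:ℂ) * iteratedDeriv (k+1) ψ x
            + ((χ:ℂ) - (k:ℂ)*((k:ℂ)+1) - (c:ℂ)^2*(x:ℂ)^2) * iteratedDeriv k ψ x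
            - 2*(c:ℂ)^2*(k:ℂ)*(x:ℂ) * iteratedDeriv (k-1) ψ x
            - (c:ℂ)^2*(k:ℂ)*((k:ℂ)-1) * iteratedDeriv (k-2) ψ x) x
          = (fun _ : ℝ => (0:ℂ)) x := fun x hx => ih x hx
    have hFd : HasDerivAt (fun x : ℝ =>
          (1 - (x:ℂ)^2) * iteratedDeriv (k+2) ψ x
            - 2*((k:ℂ)+1)*(x:ℂ) * iteratedDeriv (k+1) ψ x
            + ((χ:ℂ) - (k:ℂ)*((k:ℂ)+1) - (c:ℂ)^2*(x:ℂ)^2) * iteratedDeriv k ψ x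
            - 2*(c:ℂ)^2*(k:ℂ)*(x:ℂ) * iteratedDeriv (k-1) ψ x
            - (c:ℂ)^2*(k:ℂ)*((k:ℂ)-1) * iteratedDeriv (k-2) ψ x) 0 y := by
      refine (hasDerivAt_const y (0:ℂ)).congr_of_eventuallyEq ?_
      exact Filter.eventuallyEq_of_mem (isOpen_Ioo.mem_nhds hy) hFzero
    have hD := fun n => hasDeriv_chain hψ n y hy
    have hsq : HasDerivAt (fun x : ℝ => (x:ℂ)^2) (2*(y:ℂ)) y := by
      simpa using (hasDerivAt_pow 2 (y:ℂ)).comp_ofReal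
    have hf1 := (hasDerivAt_const y (1:ℂ)).sub hsq
    have hf2 : HasDerivAt (fun x : ℝ => 2*((k:ℂ)+1)*(x:ℂ)) (2*((k:ℂ)+1)*1) y :=
      (ofReal_hasDerivAt (y := y)).const_mul _
    have hf3 := (hasDerivAt_const y ((χ:ℂ) - (k:ℂ)*((k:ℂ)+1))).sub
      (hsq.const_mul ((c:ℂ)^2))
    have hf4 : HasDerivAt (fun x : ℝ => 2*(c:ℂ)^2*(k:ℂ)*(x:ℂ)) (2*(c:ℂ)^2*(k:ℂ)*1) y :=
      (ofReal_hasDerivAt (y := y)).const_mul _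
    have hE := ((((hf1.mul (hD (k+2))).sub (hf2.mul (hD (k+1)))).add (hf3.mul (hD k))).sub
        (hf4.mul (hD (k-1)))).sub ((hD (k-2)).const_mul ((c:ℂ)^2*(k:ℂ)*((k:ℂ)-1)))
    have key := hFd.unique hE
    have hA := cast_kill (ψ := ψ) k y
    have hB := cast_kill2 (ψ := ψ) k y
    have e1 : k+1+2 = k+3 := by omega
    have e2 : k+1-1 = k := by omega
    have e3 : k+1-2 = k-1 := by omega
    rw [e1, e2, e3]
    push_cast
    simp only [Pi.sub_apply] at key
    linear_combination -key + 2*(c:ℂ)^2*(y:ℂ)*hA + (c:ℂ)^2*hB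

private lemma deriv_eq_u {ψ : ℝ → ℂ} {c χ : ℝ} {u : ℕ → ℝ}
    (hψ : ContDiffOn ℝ ((⊤:ℕ∞):WithTop ℕ∞) ψ (Ioo (-3:ℝ) 1))
    (hode : ∀ y ∈ Ioo (-3 : ℝ) 1,
      (1 - (y : ℂ) ^ 2) * iteratedDeriv 2 ψ y - 2 * (y : ℂ) * deriv ψ y
        - (c : ℂ) ^ 2 * (y : ℂ) ^ 2 * ψ y = -(χ : ℂ) * ψ y)
    (hu0 : u 0 = 1)
    (hurec : ∀ k : ℕ,
      u (k + 1) =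
        ((-χ + c ^ 2 + (k : ℝ) * ((k : ℝ) + 1)) * u k
          - 2 * c ^ 2 * (k : ℝ) * u (k - 1)
          + c ^ 2 * (k : ℝ) * ((k : ℝ) - 1) * u (k - 2)) / (2 * ((k : ℝ) + 1))) :
    ∀ k : ℕ, iteratedDeriv k ψ (-1) = ψ (-1) * (u k : ℂ) := by
  have hmem : (-1:ℝ) ∈ Ioo (-3:ℝ) 1 := by constructor <;> norm_num
  have main : ∀ n : ℕ, ∀ k ≤ n, iteratedDeriv k ψ (-1) = ψ (-1) * (u k : ℂ) := by
    intro n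
    induction n with
    | zero =>
      intro k hk
      interval_cases k
      simp [iteratedDeriv_zero, hu0]
    | succ n ih =>
      intro k hk
      rcases Nat.lt_succ_iff_lt_or_eq.mp (Nat.lt_succ_of_le hk) with h | rfl
      · exact ih k (Nat.lt_succ_iff.mp h)
      · -- k = n + 1
        have hQ := Qrec c χ hψ hode n (-1) hmem
        have i0 := ih n le_rfl
        have i1 := ih (n-1) (Nat.sub_le n 1)
        have i2 := ih (n-2) (Nat.sub_le n 2)
        have h2r : (2 * ((n:ℝ)+1)) ≠ 0 := by positivity
        have hu' : 2 * ((n:ℝ)+1) * u (n+1)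
            = (-χ + c ^ 2 + (n : ℝ) * ((n : ℝ) + 1)) * u n
              - 2 * c ^ 2 * (n : ℝ) * u (n - 1)
              + c ^ 2 * (n : ℝ) * ((n : ℝ) - 1) * u (n - 2) := by
          rw [hurec n]
          field_simp
        have hu'' : (2 * ((n:ℂ)+1)) * ((u (n+1) : ℝ) : ℂ)
            = ((-χ:ℂ) + (c:ℂ) ^ 2 + (n : ℂ) * ((n : ℂ) + 1)) * ((u n : ℝ):ℂ)
              - 2 * (c:ℂ) ^ 2 * (n : ℂ) * ((u (n - 1) : ℝ):ℂ)
              + (c:ℂ) ^ 2 * (n : ℂ) * ((n : ℂ) - 1) * ((u (n - 2) : ℝ):ℂ) := by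
          exact_mod_cast congrArg (fun t : ℝ => (t : ℂ)) hu'
        have h2c : (2 * ((n:ℂ)+1)) ≠ 0 := by
          have := Complex.ofReal_ne_zero.mpr h2r
          push_cast at this
          exact this
        refine mul_left_cancel₀ h2c ?_
        push_cast at hQ ⊢
        linear_combination hQ - (ψ (-1))*hu'' + ((n:ℂ)*((n:ℂ)+1) + (c:ℂ)^2 - (χ:ℂ))*i0
          - 2*(c:ℂ)^2*(n:ℂ)*i1 + (c:ℂ)^2*(n:ℂ)*((n:ℂ)-1)*i2
  exact fun k => main k k le_rfl

private lemma sum_eq {ψ : ℝ → ℂ} {u : ℕ → ℝ} (hne : ψ (-1) ≠ 0)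
    (hdu : ∀ k : ℕ, iteratedDeriv k ψ (-1) = ψ (-1) * (u k : ℂ))
    (hTaylor : ∀ ξ ∈ Ioo (-2 : ℝ) 2,
      HasSum (fun k : ℕ => (ξ : ℂ) ^ k * iteratedDeriv k ψ (-1) / (k.factorial : ℂ))
        (ψ (-1 + ξ)))
    {ξ : ℝ} (hξ : ξ ∈ Ioo (-2:ℝ) 2) :
    ψ (-1 + ξ) = ψ (-1) * ((∑' k : ℕ, ξ ^ k * u k / (k.factorial : ℝ) : ℝ) : ℂ) := by
  have h := hTaylor ξ hξ
  have hfun : (fun k : ℕ => (ξ:ℂ)^k * iteratedDeriv k ψ (-1) / (k.factorial : ℂ))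
      = fun k : ℕ => ψ (-1) * (((ξ ^ k * u k / (k.factorial : ℝ) : ℝ)) : ℂ) := by
    funext k
    rw [hdu k]
    push_cast
    ring
  rw [hfun] at h
  have hdiv := h.div_const (ψ (-1))
  have hfun2 : (fun k : ℕ => ψ (-1) * (((ξ ^ k * u k / (k.factorial : ℝ) : ℝ)) : ℂ) / ψ (-1))
      = fun k : ℕ => (((ξ ^ k * u k / (k.factorial : ℝ) : ℝ)) : ℂ) := by
    funext k
    rw [mul_comm, mul_div_assoc, div_self hne, mul_one]
  rw [hfun2] at hdiv
  have hre : HasSum (fun k : ℕ => ξ ^ k * u k / (k.factorial : ℝ))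
      ((ψ (-1 + ξ) / ψ (-1)).re) := by
    have := ((Complex.hasSum_iff _ _).mp hdiv).1
    simpa [← Complex.ofReal_pow] using this
  have hC : HasSum (fun k : ℕ => (((ξ ^ k * u k / (k.factorial : ℝ) : ℝ)) : ℂ))
      (((ψ (-1 + ξ) / ψ (-1)).re : ℝ) : ℂ) := by
    simpa using hre.mapL Complex.ofRealCLM
  have huniq : ψ (-1 + ξ) / ψ (-1) = (((ψ (-1 + ξ) / ψ (-1)).re : ℝ) : ℂ) := hdiv.unique hC
  rw [hre.tsum_eq, ← huniq]
  field_simp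

/-- Corollary to Theorem 3, with reflection: for a joint eigenfunction `ψ`
of the confluent Heun operator (eigenvalue `−χ`) and of the finite Fourier transform
(eigenvalue `μ`) with definite parity `ψ(−x) = ε ψ(x)`, one has
`μ = ∫₀¹ (e^{ic(1−ξ)} + ε e^{−ic(1−ξ)}) Σ_k ξ^k u_k/k! dξ`, where `u_k = U_k(−χ)`. -/
theorem stmt9 (c χ : ℝ) (hc : 0 < c) (μ : ℂ) (ε : ℝ) (hε : ε = 1 ∨ ε = -1)
    (ψ : ℝ → ℂ) (hψ : ContDiffOn ℝ (⊤ : ℕ∞) ψ (Ioo (-3 : ℝ) 1))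
    (hode : ∀ y ∈ Ioo (-3 : ℝ) 1,
      (1 - (y : ℂ) ^ 2) * iteratedDeriv 2 ψ y - 2 * (y : ℂ) * deriv ψ y
        - (c : ℂ) ^ 2 * (y : ℂ) ^ 2 * ψ y = -(χ : ℂ) * ψ y)
    (hne : ψ (-1) ≠ 0)
    (hTaylor : ∀ ξ ∈ Ioo (-2 : ℝ) 2,
      HasSum (fun k : ℕ => (ξ : ℂ) ^ k * iteratedDeriv k ψ (-1) / (k.factorial : ℂ))
        (ψ (-1 + ξ)))
    (hparity : ∀ x ∈ Icc (-1 : ℝ) 1, ψ (-x) = (ε : ℂ) * ψ x)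
    (heig : ∀ x ∈ Icc (-1 : ℝ) 1,
      (∫ t in (-1 : ℝ)..1, Complex.exp (Complex.I * c * x * t) * ψ t) = μ * ψ x)
    (u : ℕ → ℝ) (hu0 : u 0 = 1)
    (hurec : ∀ k : ℕ,
      u (k + 1) =
        ((-χ + c ^ 2 + (k : ℝ) * ((k : ℝ) + 1)) * u k
          - 2 * c ^ 2 * (k : ℝ) * u (k - 1)
          + c ^ 2 * (k : ℝ) * ((k : ℝ) - 1) * u (k - 2)) / (2 * ((k : ℝ) + 1))) :
    μ = ∫ ξ in (0 : ℝ)..1,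
          (Complex.exp (Complex.I * c * (1 - ξ)) +
              (ε : ℂ) * Complex.exp (-(Complex.I * c * (1 - ξ)))) *
            ((∑' k : ℕ, ξ ^ k * u k / (k.factorial : ℝ) : ℝ) : ℂ) := by
  have hψ' : ContDiffOn ℝ ((⊤:ℕ∞):WithTop ℕ∞) ψ (Ioo (-3:ℝ) 1) := hψ.of_le (by simp)
  have hdu := deriv_eq_u hψ' hode hu0 hurec
  have hε2 : (ε:ℂ) * (ε:ℂ) = 1 := by rcases hε with h | h <;> subst h <;> norm_num
  have hpar2 : ∀ x ∈ Icc (-1:ℝ) 1, ψ x = (ε:ℂ) * ψ (-x) := by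
    intro x hx
    rw [hparity x hx, ← mul_assoc, hε2, one_mul]
  -- the series value, as a complex-valued function
  set S : ℝ → ℂ := fun ξ => ((∑' k : ℕ, ξ ^ k * u k / (k.factorial : ℝ) : ℝ) : ℂ) with hS
  have hsum : ∀ ξ ∈ Icc (0:ℝ) 1, ψ (-1 + ξ) = ψ (-1) * S ξ := by
    intro ξ hξ
    exact sum_eq hne hdu hTaylor (by constructor <;> [linarith [hξ.1]; linarith [hξ.2]])
  have hψc : ContinuousOn ψ (Ioo (-3:ℝ) 1) := hψ.continuousOn
  -- continuity of the two pieces on [0,1]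
  have hmap : ∀ ξ ∈ Icc (0:ℝ) 1, -1 + ξ ∈ Ioo (-3:ℝ) 1 := by
    intro ξ hξ
    constructor <;> [linarith [hξ.1]; linarith [hξ.2]]
  have hcψ : ContinuousOn (fun ξ : ℝ => ψ (-1 + ξ)) (Icc (0:ℝ) 1) :=
    hψc.comp ((continuous_const.add continuous_id).continuousOn) hmap
  have hexp1 : Continuous (fun ξ : ℝ => Complex.exp (Complex.I * c * (1 - ξ))) := by
    fun_prop
  have hexp2 : Continuous (fun ξ : ℝ => Complex.exp (-(Complex.I * c * (1 - ξ)))) := by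
    fun_prop
  have hI1 : IntervalIntegrable (fun ξ : ℝ => Complex.exp (Complex.I * c * (1 - ξ)) * ψ (-1 + ξ))
      MeasureTheory.volume 0 1 := by
    apply ContinuousOn.intervalIntegrable
    rw [uIcc_of_le (by norm_num : (0:ℝ) ≤ 1)]
    exact hexp1.continuousOn.mul hcψ
  have hI2 : IntervalIntegrable
      (fun ξ : ℝ => (ε:ℂ) * (Complex.exp (-(Complex.I * c * (1 - ξ))) * ψ (-1 + ξ)))
      MeasureTheory.volume 0 1 := by
    apply ContinuousOn.intervalIntegrable
    rw [uIcc_of_le (by norm_num : (0:ℝ) ≤ 1)]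
    exact continuousOn_const.mul (hexp2.continuousOn.mul hcψ)
  -- define g
  set g : ℝ → ℂ := fun t => Complex.exp (-(Complex.I * c * t)) * ψ t with hg
  -- step 1 : first piece equals ∫_{-1}^0 g
  have step1 : (∫ ξ in (0:ℝ)..1, Complex.exp (Complex.I * c * (1 - ξ)) * ψ (-1 + ξ))
      = ∫ t in (-1:ℝ)..0, g t := by
    have e : (fun ξ : ℝ => Complex.exp (Complex.I * c * (1 - ξ)) * ψ (-1 + ξ))
        = fun ξ : ℝ => g (ξ + (-1)) := by
      funext ξ
      simp only [hg]
      rw [show -1 + ξ = ξ + (-1) by ring]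
      congr 1
      congr 1
      push_cast
      ring
    rw [e, intervalIntegral.integral_comp_add_right g (-1)]
    norm_num
  -- step 2 : second piece equals ∫_0^1 g
  have step2 : (∫ ξ in (0:ℝ)..1, (ε:ℂ) * (Complex.exp (-(Complex.I * c * (1 - ξ))) * ψ (-1 + ξ)))
      = ∫ t in (0:ℝ)..1, g t := by
    have e : EqOn (fun ξ : ℝ => (ε:ℂ) * (Complex.exp (-(Complex.I * c * (1 - ξ))) * ψ (-1 + ξ)))
        (fun ξ : ℝ => g (1 - ξ)) (uIcc (0:ℝ) 1) := by
      intro ξ hξ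
      rw [uIcc_of_le (by norm_num : (0:ℝ) ≤ 1)] at hξ
      simp only [hg]
      have hx : (-1 + ξ) ∈ Icc (-1:ℝ) 1 := by
        constructor <;> [linarith [hξ.1]; linarith [hξ.2]]
      have : ψ (1 - ξ) = (ε:ℂ) * ψ (-1 + ξ) := by
        have := hparity (-1 + ξ) hx
        rw [show -(-1 + ξ) = 1 - ξ by ring] at this
        exact this
      rw [this]
      have harg : -(Complex.I * c * ((1:ℝ) - ξ : ℝ)) = -(Complex.I * c * (1 - (ξ:ℂ))) := by
        push_cast
        ring
      rw [harg]
      ring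
    rw [intervalIntegral.integral_congr e, intervalIntegral.integral_comp_sub_left g 1]
    norm_num
  -- interval integrability of g on the two halves
  have hg1 : IntervalIntegrable g MeasureTheory.volume (-1) 0 := by
    apply ContinuousOn.intervalIntegrable
    rw [uIcc_of_le (by norm_num : (-1:ℝ) ≤ 0)]
    apply ContinuousOn.mul
    · fun_prop
    · exact hψc.mono (fun t ht => by constructor <;> [linarith [ht.1]; linarith [ht.2]])
  have hg2 : IntervalIntegrable g MeasureTheory.volume 0 1 := by
    apply ContinuousOn.intervalIntegrable
    rw [uIcc_of_le (by norm_num : (0:ℝ) ≤ 1)]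
    have hcont : ContinuousOn (fun t : ℝ => Complex.exp (-(Complex.I * c * t)) * ((ε:ℂ) * ψ (-t)))
        (Icc (0:ℝ) 1) := by
      apply ContinuousOn.mul
      · fun_prop
      · apply ContinuousOn.mul continuousOn_const
        exact hψc.comp continuous_neg.continuousOn
          (fun t ht => ⟨by linarith [ht.2], by linarith [ht.1]⟩)
    apply hcont.congr
    intro t ht
    simp only [hg]
    rw [hpar2 t ⟨by linarith [ht.1], ht.2⟩]
  -- the eigenvalue equation at x = -1
  have hint := heig (-1) (by constructor <;> norm_num)
  have hint' : (∫ t in (-1:ℝ)..1, g t) = μ * ψ (-1) := by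
    rw [← hint]
    apply intervalIntegral.integral_congr
    intro t _
    simp only [hg]
    congr 1
    congr 1
    push_cast
    ring
  -- put everything together
  have key : ψ (-1) * (∫ ξ in (0:ℝ)..1,
      (Complex.exp (Complex.I * c * (1 - ξ)) +
        (ε : ℂ) * Complex.exp (-(Complex.I * c * (1 - ξ)))) * S ξ) = μ * ψ (-1) := by
    rw [← intervalIntegral.integral_const_mul]
    have e : EqOn (fun ξ : ℝ => ψ (-1) * ((Complex.exp (Complex.I * c * (1 - ξ)) +
        (ε : ℂ) * Complex.exp (-(Complex.I * c * (1 - ξ)))) * S ξ))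
        (fun ξ : ℝ => Complex.exp (Complex.I * c * (1 - ξ)) * ψ (-1 + ξ)
          + (ε:ℂ) * (Complex.exp (-(Complex.I * c * (1 - ξ))) * ψ (-1 + ξ))) (uIcc (0:ℝ) 1) := by
      intro ξ hξ
      rw [uIcc_of_le (by norm_num : (0:ℝ) ≤ 1)] at hξ
      simp only
      rw [hsum ξ hξ]
      ring
    rw [intervalIntegral.integral_congr e, intervalIntegral.integral_add hI1 hI2,
      step1, step2, intervalIntegral.integral_add_adjacent_intervals hg1 hg2]
    exact hint'
  have key2 : (∫ ξ in (0:ℝ)..1,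
      (Complex.exp (Complex.I * c * (1 - ξ)) +
        (ε : ℂ) * Complex.exp (-(Complex.I * c * (1 - ξ)))) * S ξ) * ψ (-1) = μ * ψ (-1) := by
    rw [mul_comm]
    exact key
  exact (mul_right_cancel₀ hne key2).symm
end

section
/- (Theorem 4, eigenfunction form) Let c > 0, χ ∈ ℝ, μ ∈ ℝ, and let ψ : ℝ → ℂ be C^∞ on (−3, 1), satisfying (1−y²)ψ''(y) − 2y ψ'(y) − c² y² ψ(y) = −χ ψ(y) for all y ∈ (−3, 1), with ψ(−1) ≠ 0, and such that for every ξ ∈ (−2, 2) the series Σ_{k≥0} ξ^k ψ^{(k)}(−1)/k! has sum ψ(−1+ξ). Assume that ψ is an eigenfunction of the sinc-kernel integral operator: for all x ∈ [−1, 1], ∫_{−1}^{1} K_c(x−t) ψ(t) dt = μ ψ(x), where K_c(u) = sin(cu)/(πu) for u ≠ 0 and K_c(0) = c/π. Define (u_k)_{k≥0} by u_0 = 1 and, for k ≥ 0, u_{k+1} = ( (−χ + c² + k(k+1)) u_k − 2c²k u_{k−1} + c²k(k−1) u_{k−2} ) / (2(k+1)), with u_j = 0 for j < 0. Then μ = ∫_{0}^{2}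 K_c(ξ) ( Σ_{k≥0} ξ^k u_k / k! ) dξ. -/
open Set Real

/-- The sinc kernel `K_c(u) = sin(cu)/(πu)` for `u ≠ 0`, with value `c/π` at `u = 0`. -/
noncomputable def sincKer (c u : ℝ) : ℝ :=
  if u = 0 then c / Real.pi else Real.sin (c * u) / (Real.pi * u)

/-- Theorem 4, eigenfunction form: if `ψ` is a joint eigenfunction of the
confluent Heun operator (eigenvalue `−χ`) and of the sinc-kernel integral operator `Q_c`
(eigenvalue `μ`), with `ψ(−1) ≠ 0` and convergent Taylor series at `−1`, then
`μ = ∫₀² K_c(ξ) Σ_k ξ^k u_k/k! dξ`, where `u_k = U_k(−χ)`. -/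
theorem stmt10 (c χ μ : ℝ) (hc : 0 < c)
    (ψ : ℝ → ℂ) (hψ : ContDiffOn ℝ (⊤ : ℕ∞) ψ (Ioo (-3 : ℝ) 1))
    (hode : ∀ y ∈ Ioo (-3 : ℝ) 1,
      (1 - (y : ℂ) ^ 2) * iteratedDeriv 2 ψ y - 2 * (y : ℂ) * deriv ψ y
        - (c : ℂ) ^ 2 * (y : ℂ) ^ 2 * ψ y = -(χ : ℂ) * ψ y)
    (hne : ψ (-1) ≠ 0)
    (hTaylor : ∀ ξ ∈ Ioo (-2 : ℝ) 2,
      HasSum (fun k : ℕ => (ξ : ℂ) ^ k * iteratedDeriv k ψ (-1) / (k.factorial : ℂ))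
        (ψ (-1 + ξ)))
    (heig : ∀ x ∈ Icc (-1 : ℝ) 1,
      (∫ t in (-1 : ℝ)..1, (sincKer c (x - t) : ℂ) * ψ t) = (μ : ℂ) * ψ x)
    (u : ℕ → ℝ) (hu0 : u 0 = 1)
    (hurec : ∀ k : ℕ,
      u (k + 1) =
        ((-χ + c ^ 2 + (k : ℝ) * ((k : ℝ) + 1)) * u k
          - 2 * c ^ 2 * (k : ℝ) * u (k - 1)
          + c ^ 2 * (k : ℝ) * ((k : ℝ) - 1) * u (k - 2)) / (2 * ((k : ℝ) + 1))) :
    μ = ∫ ξ in (0 : ℝ)..2, sincKer c ξ * (∑' k : ℕ, ξ ^ k * u k / (k.factorial : ℝ)) := by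
  have hs : IsOpen (Ioo (-3 : ℝ) 1) := isOpen_Ioo
  set D : ℕ → ℝ → ℂ := fun j => iteratedDeriv j ψ with hD_def
  -- smoothness of all iterated derivatives
  have hC : ∀ k : ℕ, ContDiffOn ℝ (⊤ : ℕ∞) (D k) (Ioo (-3 : ℝ) 1) := by
    intro k
    induction k with
    | zero => simpa [hD_def] using hψ
    | succ k ih =>
      have : D (k + 1) = deriv (D k) := iteratedDeriv_succ
      rw [this]
      exact ih.deriv_of_isOpen hs (by simp)
  have hdiff : ∀ k : ℕ, ∀ y ∈ Ioo (-3 : ℝ) 1, DifferentiableAt ℝ (D k) y := fun k y hy =>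
    ((hC k).differentiableOn (by simp)).differentiableAt (hs.mem_nhds hy)
  -- the differentiated ODE, all orders
  have hQ : ∀ k : ℕ, ∀ y ∈ Ioo (-3 : ℝ) 1,
      (1 - (y : ℂ) * (y : ℂ)) * D (k + 2) y - 2 * ((k : ℂ) + 1) * ((y : ℂ) * D (k + 1) y)
        - (k : ℂ) * ((k : ℂ) + 1) * D k y
        - (c : ℂ) ^ 2 * ((y : ℂ) * (y : ℂ) * D k y + 2 * (k : ℂ) * ((y : ℂ) * D (k - 1) y)
            + (k : ℂ) * ((k : ℂ) - 1) * D (k - 2) y)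
        = -(χ : ℂ) * D k y := by
    intro k
    induction k with
    | zero =>
      intro y hy
      have h0 := hode y hy
      have h1 : deriv ψ = D 1 := (iteratedDeriv_one (f := ψ)).symm
      rw [h1] at h0
      simp only [hD_def, iteratedDeriv_zero] at h0 ⊢
      push_cast
      linear_combination h0
    | succ k ih =>
      intro y hy
      have hD' : ∀ j, HasDerivAt (D j) (D (j + 1) y) y := by
        intro j
        have := (hdiff j y hy).hasDerivAt
        rwa [show D (j + 1) = deriv (D j) from iteratedDeriv_succ]
      have hx : HasDerivAt (fun x : ℝ => (x : ℂ)) 1 y := by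
        simpa using (hasDerivAt_id y).ofReal_comp
      -- derivative of the order-k identity
      have t1 := ((hasDerivAt_const y (1 : ℂ)).sub (hx.mul hx)).mul (hD' (k + 2))
      have t2 := ((hx.mul (hD' (k + 1))).const_mul (2 * ((k : ℂ) + 1)))
      have t3 := (hD' k).const_mul ((k : ℂ) * ((k : ℂ) + 1))
      have t4i := (((hx.mul hx).mul (hD' k)).add
          ((hx.mul (hD' (k - 1))).const_mul (2 * (k : ℂ)))).add
          ((hD' (k - 2)).const_mul ((k : ℂ) * ((k : ℂ) - 1)))
      have t4 := t4i.const_mul ((c : ℂ) ^ 2)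
      have t5 := (hD' k).const_mul (-(χ : ℂ))
      have hGE := (((t1.sub t2).sub t3).sub t4).sub t5
      have hG0 : HasDerivAt (fun x : ℝ =>
          (1 - (x : ℂ) * (x : ℂ)) * D (k + 2) x
            - 2 * ((k : ℂ) + 1) * ((x : ℂ) * D (k + 1) x)
            - (k : ℂ) * ((k : ℂ) + 1) * D k x
            - (c : ℂ) ^ 2 * ((x : ℂ) * (x : ℂ) * D k x + 2 * (k : ℂ) * ((x : ℂ) * D (k - 1) x)
                + (k : ℂ) * ((k : ℂ) - 1) * D (k - 2) x)
            - -(χ : ℂ) * D k x) 0 y := by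
        refine (hasDerivAt_const y (0 : ℂ)).congr_of_eventuallyEq ?_
        filter_upwards [hs.mem_nhds hy] with x hx'
        have := ih x hx'
        linear_combination this
      have hE := hG0.unique hGE
      -- helper identities for truncated subtraction
      have h1 : (k : ℂ) * D (k - 1 + 1) y = (k : ℂ) * D k y := by
        cases k with
        | zero => simp
        | succ k => norm_num
      have h2 : (k : ℂ) * ((k : ℂ) - 1) * D (k - 2 + 1) y
          = (k : ℂ) * ((k : ℂ) - 1) * D (k - 1) y := by
        match k with
        | 0 => simp
        | 1 => norm_num
        | (k + 2) => norm_num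
      have hk1 : (k + 1 : ℕ) - 1 = k := rfl
      have hk2 : (k + 1 : ℕ) - 2 = k - 1 := rfl
      rw [hk1, hk2]
      simp only [show k + 1 + 1 = k + 2 from rfl, show k + 1 + 2 = k + 3 from rfl,
        show k + 2 + 1 = k + 3 from rfl, Pi.sub_apply, Pi.mul_apply] at hE h1 h2 ⊢
      push_cast
      linear_combination -hE + 2 * (c : ℂ) ^ 2 * (y : ℂ) * h1 + (c : ℂ) ^ 2 * h2
  -- recurrence for derivatives at -1
  have hm1 : (-1 : ℝ) ∈ Ioo (-3 : ℝ) 1 := by norm_num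
  have hrec : ∀ k : ℕ, 2 * ((k : ℂ) + 1) * D (k + 1) (-1)
      = (-(χ : ℂ) + (c : ℂ) ^ 2 + (k : ℂ) * ((k : ℂ) + 1)) * D k (-1)
        - 2 * (c : ℂ) ^ 2 * (k : ℂ) * D (k - 1) (-1)
        + (c : ℂ) ^ 2 * (k : ℂ) * ((k : ℂ) - 1) * D (k - 2) (-1) := by
    intro k
    have h := hQ k (-1) hm1
    push_cast at h
    linear_combination h
  -- derivatives at -1 are ψ(-1) * u k
  have hak : ∀ k : ℕ, D k (-1) = ψ (-1) * (u k : ℂ) := by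
    intro k
    induction k using Nat.strong_induction_on with
    | _ k ih =>
      match k with
      | 0 => simp [hD_def, hu0, iteratedDeriv_zero]
      | (k + 1) =>
        have h := hrec k
        have e0 : D k (-1) = ψ (-1) * (u k : ℂ) := ih k (by omega)
        have e1 : D (k - 1) (-1) = ψ (-1) * (u (k - 1) : ℂ) := ih (k - 1) (by omega)
        have e2 : D (k - 2) (-1) = ψ (-1) * (u (k - 2) : ℂ) := ih (k - 2) (by omega)
        have hk0 : (2 * ((k : ℝ) + 1)) ≠ 0 := by positivity
        have hu := hurec k
        rw [eq_div_iff hk0] at hu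
        have hk0' : (2 * ((k : ℂ) + 1)) ≠ 0 := by
          have : ((k : ℂ) + 1) ≠ 0 := by
            have := Nat.cast_ne_zero (R := ℂ).mpr (Nat.succ_ne_zero k)
            push_cast at this
            exact this
          exact mul_ne_zero two_ne_zero this
        apply mul_left_cancel₀ hk0'
        rw [h, e0, e1, e2]
        have hu' : (u (k + 1) : ℂ) * (2 * ((k : ℂ) + 1))
            = ((-(χ : ℂ) + (c : ℂ) ^ 2 + (k : ℂ) * ((k : ℂ) + 1)) * (u k : ℂ)
              - 2 * (c : ℂ) ^ 2 * (k : ℂ) * (u (k - 1) : ℂ)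
              + (c : ℂ) ^ 2 * (k : ℂ) * ((k : ℂ) - 1) * (u (k - 2) : ℂ)) := by
          exact_mod_cast congrArg (Complex.ofReal) hu
        linear_combination -ψ (-1) * hu'
  -- the Taylor series identity with the u's
  have hS : ∀ ξ ∈ Ioo (-2 : ℝ) 2,
      ψ (-1 + ξ) = ψ (-1) * ((∑' k : ℕ, ξ ^ k * u k / (k.factorial : ℝ) : ℝ) : ℂ) := by
    intro ξ hξ
    have h := hTaylor ξ hξ
    have heq : (fun k : ℕ => (ξ : ℂ) ^ k * iteratedDeriv k ψ (-1) / (k.factorial : ℂ))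
        = fun k : ℕ => ψ (-1) * (((ξ ^ k * u k / (k.factorial : ℝ) : ℝ)) : ℂ) := by
      funext k
      rw [show iteratedDeriv k ψ (-1) = D k (-1) from rfl, hak k]
      push_cast
      ring
    rw [heq] at h
    have h2 : HasSum (fun k : ℕ => (((ξ ^ k * u k / (k.factorial : ℝ) : ℝ)) : ℂ))
        (ψ (-1 + ξ) / ψ (-1)) := by
      have := h.div_const (ψ (-1))
      simpa [mul_div_assoc, mul_div_cancel_left₀ _ hne] using this
    rw [Complex.hasSum_iff] at h2
    simp only [Complex.ofReal_re, Complex.ofReal_im] at h2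
    have him : (ψ (-1 + ξ) / ψ (-1)).im = 0 := h2.2.unique hasSum_zero
    have hre : (ψ (-1 + ξ) / ψ (-1)).re = ∑' k : ℕ, ξ ^ k * u k / (k.factorial : ℝ) :=
      h2.1.tsum_eq.symm
    have : ψ (-1 + ξ) / ψ (-1) = ((∑' k : ℕ, ξ ^ k * u k / (k.factorial : ℝ) : ℝ) : ℂ) := by
      apply Complex.ext
      · simpa using hre
      · simpa using him
    field_simp at this
    rw [this]
  -- change of variables in the eigen relation at x = -1
  have hKneg : ∀ ξ : ℝ, sincKer c (-ξ) = sincKer c ξ := by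
    intro ξ
    unfold sincKer
    rcases eq_or_ne ξ 0 with h | h
    · simp [h]
    · rw [if_neg (neg_ne_zero.mpr h), if_neg h]
      rw [mul_neg, Real.sin_neg, mul_neg, neg_div_neg_eq]
  have hmain := heig (-1) (by norm_num)
  have hcv : (∫ t in (-1 : ℝ)..1, (sincKer c (-1 - t) : ℂ) * ψ t)
      = ∫ ξ in (0 : ℝ)..2, (sincKer c ξ : ℂ) * ψ (-1 + ξ) := by
    have := intervalIntegral.integral_comp_add_right
      (a := 0) (b := 2) (fun t => (sincKer c (-1 - t) : ℂ) * ψ t) (-1)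
    norm_num at this
    rw [← this]
    apply intervalIntegral.integral_congr
    intro ξ _
    simp only
    rw [hKneg, show ξ + -1 = -1 + ξ by ring]
  have key : (μ : ℂ) * ψ (-1)
      = ∫ ξ in (0 : ℝ)..2, (sincKer c ξ : ℂ) * ψ (-1 + ξ) := by
    rw [← hcv, hmain]
  -- replace ψ(-1+ξ) by the series a.e. and conclude
  have hae : ∀ᵐ x : ℝ, x ∈ Set.uIoc (0 : ℝ) 2 →
      (sincKer c x : ℂ) * ψ (-1 + x)
        = ψ (-1) * (((sincKer c x * (∑' k : ℕ, x ^ k * u k / (k.factorial : ℝ)) : ℝ)) : ℂ) := by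
    have hne2 : ∀ᵐ x : ℝ, x ≠ 2 := by
      rw [MeasureTheory.ae_iff]
      simpa using MeasureTheory.measure_singleton (2 : ℝ)
    filter_upwards [hne2] with x hx hxI
    rw [Set.uIoc_of_le (by norm_num : (0:ℝ) ≤ 2)] at hxI
    have hx2 : x ∈ Ioo (-2 : ℝ) 2 := ⟨by linarith [hxI.1], lt_of_le_of_ne hxI.2 hx⟩
    rw [hS x hx2]
    push_cast
    ring
  have hint : (∫ ξ in (0 : ℝ)..2, (sincKer c ξ : ℂ) * ψ (-1 + ξ))
      = ψ (-1) * ((∫ ξ in (0 : ℝ)..2,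
          sincKer c ξ * (∑' k : ℕ, ξ ^ k * u k / (k.factorial : ℝ)) : ℝ) : ℂ) := by
    rw [intervalIntegral.integral_congr_ae hae, intervalIntegral.integral_const_mul,
      intervalIntegral.integral_ofReal]
  have : (μ : ℂ) * ψ (-1) = ψ (-1) * ((∫ ξ in (0 : ℝ)..2,
      sincKer c ξ * (∑' k : ℕ, ξ ^ k * u k / (k.factorial : ℝ)) : ℝ) : ℂ) := by
    rw [key, hint]
  rw [mul_comm] at this
  have := mul_left_cancel₀ hne this
  exact_mod_cast this
end

section
/- (Corollary to Theorem 4, eigenfunction form with reflection) Let c > 0, χ ∈ ℝ, μ ∈ ℝ, ε ∈ {1, −1}, and let ψ : ℝ → ℂ be C^∞ on (−3, 1), satisfying (1−y²)ψ''(y) − 2y ψ'(y) − c² y² ψ(y) = −χ ψ(y) for all y ∈ (−3, 1), with ψ(−1) ≠ 0, such that for every ξ ∈ (−2, 2) the series Σ_{k≥0} ξ^k ψ^{(k)}(−1)/k! has sum ψ(−1+ξ), and with parity ψ(−x) = ε ψ(x) for all x ∈ [−1, 1]. Assume that for all x ∈ [−1, 1], ∫_{−1}^{1} K_c(x−t)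 ψ(t) dt = μ ψ(x), where K_c(u) = sin(cu)/(πu) for u ≠ 0 and K_c(0) = c/π. Define (u_k)_{k≥0} by u_0 = 1 and, for k ≥ 0, u_{k+1} = ( (−χ + c² + k(k+1)) u_k − 2c²k u_{k−1} + c²k(k−1) u_{k−2} ) / (2(k+1)), with u_j = 0 for j < 0. Then μ = ∫_{0}^{1} ( K_c(ξ) + ε K_c(2−ξ) ) ( Σ_{k≥0} ξ^k u_k / k! ) dξ. -/
open Set Real

lemma sincKer_neg (c u : ℝ) : sincKer c (-u) = sincKer c u := by
  unfold sincKer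
  rcases eq_or_ne u 0 with h | h
  · simp [h]
  · rw [if_neg (by simpa using h), if_neg h]
    rw [mul_neg, Real.sin_neg, mul_neg, neg_div_neg_eq]

lemma sincKer_continuous (c : ℝ) : Continuous (sincKer c) := by
  rw [continuous_iff_continuousAt]
  intro x
  rcases eq_or_ne x 0 with rfl | hx
  · rw [← continuousWithinAt_compl_self, ContinuousWithinAt,
      show sincKer c 0 = c / Real.pi from if_pos rfl]
    have h : HasDerivAt (fun u : ℝ => Real.sin (c * u)) c 0 := by
      simpa [Function.comp_def] using (Real.hasDerivAt_sin (c * 0)).comp 0 ((hasDerivAt_id 0).const_mul c)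
    have h1 := hasDerivAt_iff_tendsto_slope.mp h
    have h2 : Filter.Tendsto (fun u : ℝ => Real.sin (c * u) / u / Real.pi)
        (nhdsWithin 0 {0}ᶜ) (nhds (c / Real.pi)) := by
      apply Filter.Tendsto.div_const
      simpa [slope_fun_def_field] using h1
    apply h2.congr'
    filter_upwards [self_mem_nhdsWithin] with u hu
    have hu' : u ≠ 0 := hu
    rw [sincKer, if_neg hu', div_div, mul_comm Real.pi u]
  · have hev : ∀ᶠ u in nhds x, Real.sin (c * u) / (Real.pi * u) = sincKer c u := by
      filter_upwards [isOpen_compl_singleton.mem_nhds (by simpa using hx)] with u hu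
      exact (if_neg hu).symm
    have hc2 : ContinuousAt (fun u => Real.sin (c * u) / (Real.pi * u)) x := by
      apply ContinuousAt.div (by fun_prop) (by fun_prop)
      simpa [Real.pi_ne_zero] using hx
    exact hc2.congr hev

lemma odeStep {S : Set ℝ} (hSo : IsOpen S) (c χ b g d e : ℂ)
    (f0 f1 f2 f3 f4 f5 : ℝ → ℂ)
    (h0 : ∀ y ∈ S, HasDerivAt (fun t => e * f0 t) (e * f1 y) y)
    (h1 : ∀ y ∈ S, HasDerivAt (fun t => d * f1 t) (d * f2 y) y)
    (h2 : ∀ y ∈ S, HasDerivAt f2 (f3 y) y)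
    (h3 : ∀ y ∈ S, HasDerivAt f3 (f4 y) y)
    (h4 : ∀ y ∈ S, HasDerivAt f4 (f5 y) y)
    (H : ∀ y ∈ S, (1 - (y:ℂ)^2) * f4 y - b * y * f3 y - g * f2 y
        - c^2 * ((y:ℂ)^2 * f2 y + d * y * f1 y + e * f0 y) = -χ * f2 y) :
    ∀ y ∈ S, (1 - (y:ℂ)^2) * f5 y - (b+2) * y * f4 y - (g+b) * f3 y
        - c^2 * ((y:ℂ)^2 * f3 y + (d+2) * y * f2 y + (e+d) * f1 y) = -χ * f3 y := by
  intro y hy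
  have hyC : HasDerivAt (fun t : ℝ => (t : ℂ)) 1 y := by
    simpa using (hasDerivAt_id y).ofReal_comp
  have hsq : HasDerivAt (fun t : ℝ => (t : ℂ) * (t : ℂ)) (1 * (y:ℂ) + (y:ℂ) * 1) y :=
    hyC.mul hyC
  have hA1 := (hsq.const_sub 1).mul (h4 y hy)
  have hA2 := (hyC.const_mul b).mul (h3 y hy)
  have hA3 := (h2 y hy).const_mul g
  have hA4 := (((hsq.mul (h2 y hy)).add (hyC.mul (h1 y hy))).add (h0 y hy)).const_mul
    ((c:ℂ)^2)
  have hL := ((hA1.sub hA2).sub hA3).sub hA4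
  have hR : HasDerivAt (fun t : ℝ => -χ * f2 t) (-χ * f3 y) y := (h2 y hy).const_mul _
  have heq : (fun t : ℝ => (1 - (t:ℂ) * (t:ℂ)) * f4 t - b * (t:ℂ) * f3 t - g * f2 t
        - c^2 * ((t:ℂ) * (t:ℂ) * f2 t + (t:ℂ) * (d * f1 t) + e * f0 t)) =ᶠ[nhds y]
      (fun t : ℝ => -χ * f2 t) := by
    filter_upwards [hSo.mem_nhds hy] with t ht
    linear_combination H t ht
  have hfinal := (hR.congr_of_eventuallyEq heq).unique hL
  linear_combination -hfinal

/-- Corollary to Theorem 4, with reflection: for a joint eigenfunction `ψ`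
of the confluent Heun operator (eigenvalue `−χ`) and of the sinc-kernel integral operator
(eigenvalue `μ`) with definite parity `ψ(−x) = ε ψ(x)`, one has
`μ = ∫₀¹ (K_c(ξ) + ε K_c(2−ξ)) Σ_k ξ^k u_k/k! dξ`, where `u_k = U_k(−χ)`. -/
theorem stmt11 (c χ μ : ℝ) (hc : 0 < c) (ε : ℝ) (hε : ε = 1 ∨ ε = -1)
    (ψ : ℝ → ℂ) (hψ : ContDiffOn ℝ (⊤ : ℕ∞) ψ (Ioo (-3 : ℝ) 1))
    (hode : ∀ y ∈ Ioo (-3 : ℝ) 1,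
      (1 - (y : ℂ) ^ 2) * iteratedDeriv 2 ψ y - 2 * (y : ℂ) * deriv ψ y
        - (c : ℂ) ^ 2 * (y : ℂ) ^ 2 * ψ y = -(χ : ℂ) * ψ y)
    (hne : ψ (-1) ≠ 0)
    (hTaylor : ∀ ξ ∈ Ioo (-2 : ℝ) 2,
      HasSum (fun k : ℕ => (ξ : ℂ) ^ k * iteratedDeriv k ψ (-1) / (k.factorial : ℂ))
        (ψ (-1 + ξ)))
    (hparity : ∀ x ∈ Icc (-1 : ℝ) 1, ψ (-x) = (ε : ℂ) * ψ x)
    (heig : ∀ x ∈ Icc (-1 : ℝ) 1,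
      (∫ t in (-1 : ℝ)..1, (sincKer c (x - t) : ℂ) * ψ t) = (μ : ℂ) * ψ x)
    (u : ℕ → ℝ) (hu0 : u 0 = 1)
    (hurec : ∀ k : ℕ,
      u (k + 1) =
        ((-χ + c ^ 2 + (k : ℝ) * ((k : ℝ) + 1)) * u k
          - 2 * c ^ 2 * (k : ℝ) * u (k - 1)
          + c ^ 2 * (k : ℝ) * ((k : ℝ) - 1) * u (k - 2)) / (2 * ((k : ℝ) + 1))) :
    μ = ∫ ξ in (0 : ℝ)..1,
          (sincKer c ξ + ε * sincKer c (2 - ξ)) *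
            (∑' k : ℕ, ξ ^ k * u k / (k.factorial : ℝ)) := by
  have hSo : IsOpen (Ioo (-3:ℝ) 1) := isOpen_Ioo
  have hm1 : (-1:ℝ) ∈ Ioo (-3:ℝ) 1 := by norm_num
  -- smoothness of all iterated derivatives on the open set
  have hA : ∀ k, ContDiffOn ℝ (⊤ : ℕ∞) (iteratedDeriv k ψ) (Ioo (-3:ℝ) 1) := by
    intro k
    induction k with
    | zero => simpa using hψ
    | succ n ih =>
      rw [iteratedDeriv_succ]
      exact ih.deriv_of_isOpen isOpen_Ioo (by simp)
  have hAd : ∀ k, ∀ y ∈ Ioo (-3:ℝ) 1,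
      HasDerivAt (iteratedDeriv k ψ) (iteratedDeriv (k+1) ψ y) y := by
    intro k y hy
    have h1 : DifferentiableAt ℝ (iteratedDeriv k ψ) y :=
      (((hA k).of_le (by simp)).differentiableOn one_ne_zero y hy).differentiableAt
        (hSo.mem_nhds hy)
    have := h1.hasDerivAt
    rwa [show iteratedDeriv (k+1) ψ y = deriv (iteratedDeriv k ψ) y by
      rw [iteratedDeriv_succ]]
  have hcm : ∀ (a : ℂ) (k : ℕ), ∀ y ∈ Ioo (-3:ℝ) 1,
      HasDerivAt (fun t => a * iteratedDeriv k ψ t) (a * iteratedDeriv (k+1) ψ y) y :=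
    fun a k y hy => (hAd k y hy).const_mul a
  -- the differentiated ODE family
  have hH0 : ∀ y ∈ Ioo (-3:ℝ) 1,
      (1 - (y:ℂ)^2) * iteratedDeriv 2 ψ y - 2 * y * iteratedDeriv 1 ψ y
        - 0 * iteratedDeriv 0 ψ y
        - (c:ℂ)^2 * ((y:ℂ)^2 * iteratedDeriv 0 ψ y + 0 * y * (0:ℂ) + 0 * (0:ℂ))
        = -(χ:ℂ) * iteratedDeriv 0 ψ y := by
    intro y hy
    have h := hode y hy
    simp only [iteratedDeriv_zero, iteratedDeriv_one]
    linear_combination h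
  have hH1 := odeStep hSo (c:ℂ) (χ:ℂ) 2 0 0 0 (fun _ => 0) (fun _ => 0)
    (iteratedDeriv 0 ψ) (iteratedDeriv 1 ψ) (iteratedDeriv 2 ψ) (iteratedDeriv 3 ψ)
    (by intro y hy; simpa using hasDerivAt_const y (0:ℂ))
    (by intro y hy; simpa using hasDerivAt_const y (0:ℂ))
    (hAd 0) (hAd 1) (hAd 2) hH0
  have hH2 := odeStep hSo (c:ℂ) (χ:ℂ) (2+2) (0+2) (0+2) (0+0) (fun _ => 0)
    (iteratedDeriv 0 ψ) (iteratedDeriv 1 ψ) (iteratedDeriv 2 ψ) (iteratedDeriv 3 ψ)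
    (iteratedDeriv 4 ψ)
    (by intro y hy; simpa using hasDerivAt_const y (0:ℂ))
    (fun y hy => hcm _ 0 y hy)
    (hAd 1) (hAd 2) (hAd 3) hH1
  have hgen : ∀ n : ℕ, ∀ y ∈ Ioo (-3:ℝ) 1,
      (1 - (y:ℂ)^2) * iteratedDeriv (n+4) ψ y
        - (2*(n:ℂ)+6) * y * iteratedDeriv (n+3) ψ y
        - ((n:ℂ)^2+5*(n:ℂ)+6) * iteratedDeriv (n+2) ψ y
        - (c:ℂ)^2 * ((y:ℂ)^2 * iteratedDeriv (n+2) ψ y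
            + (2*(n:ℂ)+4) * y * iteratedDeriv (n+1) ψ y
            + ((n:ℂ)^2+3*(n:ℂ)+2) * iteratedDeriv n ψ y)
        = -(χ:ℂ) * iteratedDeriv (n+2) ψ y := by
    intro n
    induction n with
    | zero =>
      intro y hy
      push_cast
      linear_combination hH2 y hy
    | succ n ih =>
      have hstep := odeStep hSo (c:ℂ) (χ:ℂ) (2*(n:ℂ)+6) ((n:ℂ)^2+5*(n:ℂ)+6)
        (2*(n:ℂ)+4) ((n:ℂ)^2+3*(n:ℂ)+2)
        (iteratedDeriv n ψ) (iteratedDeriv (n+1) ψ) (iteratedDeriv (n+2) ψ)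
        (iteratedDeriv (n+3) ψ) (iteratedDeriv (n+4) ψ) (iteratedDeriv (n+5) ψ)
        (fun y hy => hcm _ n y hy) (fun y hy => hcm _ (n+1) y hy)
        (hAd (n+2)) (hAd (n+3)) (hAd (n+4)) ih
      intro y hy
      have h5 : n+1+4 = n+5 := rfl
      have h4 : n+1+3 = n+4 := rfl
      have h3 : n+1+2 = n+3 := rfl
      have h2 : n+1+1 = n+2 := rfl
      rw [h5, h4, h3, h2]
      push_cast
      linear_combination hstep y hy
  -- the four-term recurrence for derivatives at -1
  have hrec : ∀ k : ℕ, 2*((k:ℂ)+1) * iteratedDeriv (k+1) ψ (-1)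
      = (-(χ:ℂ) + (c:ℂ)^2 + (k:ℂ)*((k:ℂ)+1)) * iteratedDeriv k ψ (-1)
        - 2*(c:ℂ)^2*(k:ℂ) * iteratedDeriv (k-1) ψ (-1)
        + (c:ℂ)^2*(k:ℂ)*((k:ℂ)-1) * iteratedDeriv (k-2) ψ (-1) := by
    intro k
    match k with
    | 0 =>
      have h := hH0 (-1) hm1
      push_cast at h ⊢
      linear_combination h
    | 1 =>
      have h := hH1 (-1) hm1
      push_cast at h ⊢
      linear_combination h
    | (m+2) =>
      have h := hgen m (-1) hm1
      have e1 : m+2-1 = m+1 := rfl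
      have e2 : m+2-2 = m := rfl
      have e3 : m+2+1 = m+3 := rfl
      rw [e1, e2, e3]
      push_cast at h ⊢
      linear_combination h
  -- derivatives at -1 are multiples of ψ(-1)
  have hval : ∀ k, iteratedDeriv k ψ (-1) = (u k : ℂ) * ψ (-1) := by
    intro k
    induction k using Nat.strong_induction_on with
    | _ k ih =>
      match k with
      | 0 => simp [iteratedDeriv_zero, hu0]
      | (j+1) =>
        have h := hrec j
        rw [ih j (by omega), ih (j-1) (by omega), ih (j-2) (by omega)] at h
        have hne2 : ((j:ℂ)+1) ≠ 0 := Nat.cast_add_one_ne_zero j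
        rw [hurec j]
        push_cast
        field_simp
        linear_combination h
  -- the Taylor series identity on [0,1]
  have hkey : ∀ ξ ∈ Icc (0:ℝ) 1,
      ψ (-1 + ξ) = ((∑' k : ℕ, ξ ^ k * u k / (k.factorial : ℝ) : ℝ) : ℂ) * ψ (-1) := by
    intro ξ hξ
    have hξ2 : ξ ∈ Ioo (-2:ℝ) 2 := ⟨by linarith [hξ.1], by linarith [hξ.2]⟩
    have hT := (hTaylor ξ hξ2).div_const (ψ (-1))
    have hfe : (fun k : ℕ => (ξ : ℂ) ^ k * iteratedDeriv k ψ (-1) / (k.factorial : ℂ)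
          / ψ (-1))
        = fun k : ℕ => ((ξ ^ k * u k / (k.factorial : ℝ) : ℝ) : ℂ) := by
      funext k
      rw [hval k]
      have hfacne : ((k.factorial : ℂ)) ≠ 0 := Nat.cast_ne_zero.mpr (Nat.factorial_ne_zero k)
      push_cast
      field_simp
    rw [hfe] at hT
    have hre := Complex.hasSum_re hT
    have him := Complex.hasSum_im hT
    simp only [Complex.ofReal_re] at hre
    simp only [Complex.ofReal_im] at him
    have him0 : (ψ (-1 + ξ) / ψ (-1)).im = 0 := (hasSum_zero.unique him).symm
    have hzre : ψ (-1 + ξ) / ψ (-1)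
        = ((ψ (-1 + ξ) / ψ (-1)).re : ℂ) := by
      exact (Complex.ext (by simp) (by simp [him0])).symm
    rw [hre.tsum_eq, ← hzre]
    field_simp
  -- continuity of ψ on [-1,1]
  have hcont : ContinuousOn ψ (Icc (-1:ℝ) 1) := by
    intro x hx
    rcases lt_or_eq_of_le hx.2 with hlt | heq1
    · exact ((hψ.contDiffAt (hSo.mem_nhds ⟨by linarith [hx.1], hlt⟩)).continuousAt).continuousWithinAt
    · have hat : ContinuousAt (fun t : ℝ => ψ (-t)) x := by
        apply ContinuousAt.comp
        · subst heq1
          exact (hψ.contDiffAt (hSo.mem_nhds (by norm_num))).continuousAt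
        · exact continuous_neg.continuousAt
      have hc2 : ContinuousWithinAt (fun t => (ε : ℂ) * ψ (-t)) (Icc (-1:ℝ) 1) x :=
        (continuousAt_const.mul hat).continuousWithinAt
      apply hc2.congr
      · intro t ht
        have := hparity (-t) ⟨by linarith [ht.2], by linarith [ht.1]⟩
        simpa using this
      · have := hparity (-x) ⟨by linarith [hx.2], by linarith [hx.1]⟩
        simpa using this
  -- the eigenvalue equation at x = -1, change of variables
  have hI0 := heig (-1) (by norm_num)
  have hcv : (∫ ξ in (0:ℝ)..2, (sincKer c ξ : ℂ) * ψ (ξ - 1)) = (μ:ℂ) * ψ (-1) := by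
    have h := intervalIntegral.integral_comp_sub_right
      (fun t => (sincKer c ((-1:ℝ) - t) : ℂ) * ψ t) 1 (a := 0) (b := 2)
    rw [show (0:ℝ)-1 = -1 by norm_num, show (2:ℝ)-1 = 1 by norm_num] at h
    rw [← hI0, ← h]
    apply intervalIntegral.integral_congr
    intro ξ _
    simp only
    have e : (-1:ℝ) - (ξ - 1) = -ξ := by ring
    rw [e, sincKer_neg]
  -- integrability on the two halves
  have hmap1 : ∀ ξ ∈ Icc (0:ℝ) 1, ξ - 1 ∈ Icc (-1:ℝ) 1 :=
    fun ξ hξ => ⟨by linarith [hξ.1], by linarith [hξ.2]⟩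
  have hmap2 : ∀ ξ ∈ Icc (1:ℝ) 2, ξ - 1 ∈ Icc (-1:ℝ) 1 :=
    fun ξ hξ => ⟨by linarith [hξ.1], by linarith [hξ.2]⟩
  have hcψ1 : ContinuousOn (fun ξ : ℝ => ψ (ξ - 1)) (Icc (0:ℝ) 1) :=
    hcont.comp ((continuous_id.sub continuous_const).continuousOn) hmap1
  have hcψ2 : ContinuousOn (fun ξ : ℝ => ψ (ξ - 1)) (Icc (1:ℝ) 2) :=
    hcont.comp ((continuous_id.sub continuous_const).continuousOn) hmap2
  have II1 : IntervalIntegrable (fun ξ => (sincKer c ξ : ℂ) * ψ (ξ - 1))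
      MeasureTheory.volume 0 1 := by
    apply ContinuousOn.intervalIntegrable
    rw [uIcc_of_le (by norm_num : (0:ℝ) ≤ 1)]
    exact ((Complex.continuous_ofReal.comp (sincKer_continuous c)).continuousOn).mul hcψ1
  have II2 : IntervalIntegrable (fun ξ => (sincKer c ξ : ℂ) * ψ (ξ - 1))
      MeasureTheory.volume 1 2 := by
    apply ContinuousOn.intervalIntegrable
    rw [uIcc_of_le (by norm_num : (1:ℝ) ≤ 2)]
    exact ((Complex.continuous_ofReal.comp (sincKer_continuous c)).continuousOn).mul hcψ2
  have hsplit := intervalIntegral.integral_add_adjacent_intervals II1 II2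
  -- reflect the second half
  have h12 : (∫ ξ in (1:ℝ)..2, (sincKer c ξ : ℂ) * ψ (ξ - 1))
      = ∫ ξ in (0:ℝ)..1, ((ε * sincKer c (2 - ξ) : ℝ) : ℂ) * ψ (ξ - 1) := by
    have h := intervalIntegral.integral_comp_sub_left
      (fun x => (sincKer c x : ℂ) * ψ (x - 1)) 2 (a := 0) (b := 1)
    rw [show (2:ℝ)-1 = 1 by norm_num, show (2:ℝ)-0 = 2 by norm_num] at h
    rw [← h]
    apply intervalIntegral.integral_congr
    intro ξ hξ
    rw [uIcc_of_le (by norm_num : (0:ℝ) ≤ 1)] at hξ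
    simp only
    have e : (2:ℝ) - ξ - 1 = -(ξ - 1) := by ring
    rw [e]
    have hp := hparity (ξ - 1) (hmap1 ξ hξ)
    rw [hp]
    push_cast
    ring
  have II2' : IntervalIntegrable (fun ξ => ((ε * sincKer c (2 - ξ) : ℝ) : ℂ) * ψ (ξ - 1))
      MeasureTheory.volume 0 1 := by
    apply ContinuousOn.intervalIntegrable
    rw [uIcc_of_le (by norm_num : (0:ℝ) ≤ 1)]
    apply ContinuousOn.mul _ hcψ1
    exact (Complex.continuous_ofReal.comp (continuous_const.mul
      ((sincKer_continuous c).comp (continuous_const.sub continuous_id)))).continuousOn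
  -- assemble
  have hmain : (μ:ℂ) * ψ (-1)
      = ∫ ξ in (0:ℝ)..1, ((sincKer c ξ + ε * sincKer c (2 - ξ) : ℝ) : ℂ) * ψ (ξ - 1) := by
    rw [← hcv, ← hsplit, h12, ← intervalIntegral.integral_add II1 II2']
    apply intervalIntegral.integral_congr
    intro ξ _
    simp only
    push_cast
    ring
  have hfinal : (μ:ℂ) * ψ (-1)
      = ((∫ ξ in (0:ℝ)..1, (sincKer c ξ + ε * sincKer c (2 - ξ)) *
          (∑' k : ℕ, ξ ^ k * u k / (k.factorial : ℝ)) : ℝ) : ℂ) * ψ (-1) := by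
    rw [hmain]
    rw [← intervalIntegral.integral_ofReal]
    rw [show ((∫ ξ in (0:ℝ)..1, (((sincKer c ξ + ε * sincKer c (2 - ξ)) *
          (∑' k : ℕ, ξ ^ k * u k / (k.factorial : ℝ)) : ℝ) : ℂ)) * ψ (-1))
        = ∫ ξ in (0:ℝ)..1, (((sincKer c ξ + ε * sincKer c (2 - ξ)) *
          (∑' k : ℕ, ξ ^ k * u k / (k.factorial : ℝ)) : ℝ) : ℂ) * ψ (-1)
      from (intervalIntegral.integral_mul_const _ _).symm]
    apply intervalIntegral.integral_congr
    intro ξ hξ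
    rw [uIcc_of_le (by norm_num : (0:ℝ) ≤ 1)] at hξ
    simp only
    have : ψ (ξ - 1) = ψ (-1 + ξ) := by ring_nf
    rw [this, hkey ξ hξ]
    push_cast
    ring
  have := mul_right_cancel₀ hne hfinal
  exact_mod_cast this
end

section
/- (Commutation of the Heun operator with the finite Fourier transform) Let c > 0 and let ψ : ℝ → ℂ be twice continuously differentiable on a neighborhood of [−1, 1]. Let G(x) = ∫_{−1}^{1} e^{icxt} ψ(t) dt. Then G is twice differentiable on ℝ and for every x ∈ ℝ, (1−x²) G''(x) − 2x G'(x) − c²x² G(x) = ∫_{−1}^{1} e^{icxt} [ (1−t²) ψ''(t) − 2t ψ'(t) − c²t² ψ(t) ] dt. That is, T ∘ F_c = F_c ∘ T on twice continuously differentiable functions, where T is the confluent Heun operator. -/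
open Set Complex MeasureTheory
open scoped Interval

/-!
Differentiating under the integral sign gives `G⁽ᵏ⁾ = F_c[(ict)ᵏ ψ]`, so the left-hand side
is `∫ (T_x e^{icxt}) ψ(t) dt`. Since `e^{icxt}` is symmetric in `x` and `t`,
`T_x e^{icxt} = T_t e^{icxt}`, and `T` is formally self-adjoint on `[-1, 1]` with weight `1 - t²`
vanishing at the endpoints, so moving `T_t` onto `ψ` produces no boundary terms.
-/

theorem hasDerivAt_cexp_mul_ofReal (a : ℂ) (s : ℝ) :
    HasDerivAt (fun s : ℝ => cexp (a * s)) (cexp (a * s) * a) s := by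
  simpa using ((hasDerivAt_id (s : ℂ)).const_mul a).cexp.comp_ofReal

theorem continuousOn_cexp_I_mul_mul {s : Set ℝ} (c x : ℝ) {g : ℝ → ℂ}
    (hg : ContinuousOn g s) :
    ContinuousOn (fun t : ℝ => cexp (I * c * x * t) * g t) s := by
  fun_prop

theorem hasDerivAt_integral_cexp_mul {a b : ℝ} (c : ℝ) {φ : ℝ → ℂ}
    (hφ : ContinuousOn φ [[a, b]]) (x₀ : ℝ) :
    HasDerivAt (fun x : ℝ => ∫ t in a..b, cexp (I * c * x * t) * φ t)
      (∫ t in a..b, cexp (I * c * x₀ * t) * (I * c * t * φ t)) x₀ := by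
  have hmeas : ∀ (x : ℝ) {g : ℝ → ℂ}, ContinuousOn g [[a, b]] →
      AEStronglyMeasurable (fun t : ℝ => cexp (I * c * x * t) * g t) (volume.restrict (Ι a b)) :=
    fun x _ hg => ((continuousOn_cexp_I_mul_mul c x hg).mono
      uIoc_subset_uIcc).aestronglyMeasurable measurableSet_uIoc
  have htφ : ContinuousOn (fun t : ℝ => I * c * t * φ t) [[a, b]] := by fun_prop
  refine (intervalIntegral.hasDerivAt_integral_of_dominated_loc_of_deriv_le
    (bound := fun t : ℝ => ‖I * c * t * φ t‖)
    (F' := fun (x t : ℝ) => cexp (I * c * x * t) * (I * c * t * φ t))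
    (Metric.ball_mem_nhds x₀ one_pos) (.of_forall fun x => hmeas x hφ)
    (continuousOn_cexp_I_mul_mul c x₀ hφ).intervalIntegrable (hmeas x₀ htφ) ?_
    htφ.norm.intervalIntegrable ?_).2
  · refine .of_forall fun t _ x _ => ?_
    rw [norm_mul, show I * c * x * t = ((c * x * t : ℝ) : ℂ) * I by push_cast; ring,
      norm_exp_ofReal_mul_I, one_mul]
  · refine .of_forall fun t _ x _ => ?_
    have := (hasDerivAt_cexp_mul_ofReal (I * c * t) x).mul_const (φ t)
    simp only [mul_right_comm (I * c) (t : ℂ)] at this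
    simpa only [mul_assoc] using this

/-- Lagrange's identity `((1 - t²) W(e, ψ))' = e · Tψ - (T_t e) · ψ` for `e = e^{icxt}`, with
`T_t e` written as `T_x e`. -/
theorem hasDerivAt_heun_boundary (c x : ℝ) {ψ ψ' ψ'' : ℝ → ℂ} {t : ℝ}
    (h1 : HasDerivAt ψ (ψ' t) t) (h2 : HasDerivAt ψ' (ψ'' t) t) :
    HasDerivAt
      (fun s : ℝ => cexp (I * c * x * s) * ((1 - (s : ℂ) ^ 2) * (ψ' s - I * c * x * ψ s)))
      (cexp (I * c * x * t) *
          ((1 - (t : ℂ) ^ 2) * ψ'' t - 2 * t * ψ' t - c ^ 2 * t ^ 2 * ψ t)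
        - ((1 - (x : ℂ) ^ 2) * (cexp (I * c * x * t) * (I * c * t * (I * c * t * ψ t)))
          - 2 * x * (cexp (I * c * x * t) * (I * c * t * ψ t))
          - c ^ 2 * x ^ 2 * (cexp (I * c * x * t) * ψ t))) t := by
  have hweight : HasDerivAt (fun s : ℝ => 1 - (s : ℂ) ^ 2) (-(2 * (t : ℂ))) t := by
    simpa using ((hasDerivAt_id (t : ℂ)).pow 2).const_sub 1 |>.comp_ofReal
  refine ((hasDerivAt_cexp_mul_ofReal (I * c * x) t).mul
    (hweight.mul (h2.sub (h1.const_mul (I * c * x))))).congr_deriv ?_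
  simp only [Pi.mul_apply, Pi.sub_apply]
  linear_combination cexp (I * c * x * t) * c ^ 2 * (t ^ 2 - x ^ 2) * ψ t * I_sq

theorem integral_cexp_mul_heun (c x : ℝ) {ψ ψ' ψ'' : ℝ → ℂ}
    (h1 : ∀ t ∈ Icc (-1 : ℝ) 1, HasDerivAt ψ (ψ' t) t)
    (h2 : ∀ t ∈ Icc (-1 : ℝ) 1, HasDerivAt ψ' (ψ'' t) t)
    (h2c : ContinuousOn ψ'' (Icc (-1 : ℝ) 1)) :
    ∫ t in (-1 : ℝ)..1, cexp (I * c * x * t) *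
        ((1 - (t : ℂ) ^ 2) * ψ'' t - 2 * t * ψ' t - c ^ 2 * t ^ 2 * ψ t)
      = (1 - (x : ℂ) ^ 2) *
          (∫ t in (-1 : ℝ)..1, cexp (I * c * x * t) * (I * c * t * (I * c * t * ψ t)))
        - 2 * x * (∫ t in (-1 : ℝ)..1, cexp (I * c * x * t) * (I * c * t * ψ t))
        - c ^ 2 * x ^ 2 * ∫ t in (-1 : ℝ)..1, cexp (I * c * x * t) * ψ t := by
  rw [← uIcc_of_le (by norm_num : (-1 : ℝ) ≤ 1)] at h1 h2 h2c
  have h0c : ContinuousOn ψ [[-1, 1]] := fun t ht => (h1 t ht).continuousAt.continuousWithinAt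
  have h1c : ContinuousOn ψ' [[-1, 1]] := fun t ht => (h2 t ht).continuousAt.continuousWithinAt
  have hint : ∀ {g : ℝ → ℂ}, ContinuousOn g [[-1, 1]] →
      IntervalIntegrable (fun t : ℝ => cexp (I * c * x * t) * g t) volume (-1) 1 :=
    fun hg => (continuousOn_cexp_I_mul_mul c x hg).intervalIntegrable
  have hA := hint (g := fun t => I * c * t * (I * c * t * ψ t)) (by fun_prop)
  have hB := hint (g := fun t => I * c * t * ψ t) (by fun_prop)
  have hC := hint h0c
  have hT := hint
    (g := fun t => (1 - (t : ℂ) ^ 2) * ψ'' t - 2 * t * ψ' t - c ^ 2 * t ^ 2 * ψ t)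
    (by fun_prop)
  have hAB := (hA.const_mul (1 - (x : ℂ) ^ 2)).sub (hB.const_mul (2 * x))
  have hABC := hAB.sub (hC.const_mul (c ^ 2 * x ^ 2))
  have hibp := intervalIntegral.integral_eq_sub_of_hasDerivAt
    (fun t ht => hasDerivAt_heun_boundary c x (h1 t ht) (h2 t ht)) (hT.sub hABC)
  rw [intervalIntegral.integral_sub hT hABC, intervalIntegral.integral_sub hAB (hC.const_mul _),
    intervalIntegral.integral_sub (hA.const_mul _) (hB.const_mul _),
    intervalIntegral.integral_const_mul, intervalIntegral.integral_const_mul,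
    intervalIntegral.integral_const_mul] at hibp
  norm_num at hibp
  linear_combination hibp

theorem stmt13_general (c : ℝ)
    (ψ : ℝ → ℂ) (U : Set ℝ) (hU : IsOpen U) (hsub : Icc (-1 : ℝ) 1 ⊆ U)
    (hψ : ContDiffOn ℝ 2 ψ U)
    (G : ℝ → ℂ)
    (hG : ∀ x : ℝ, G x = ∫ t in (-1 : ℝ)..1, Complex.exp (Complex.I * c * x * t) * ψ t) :
    ∀ x : ℝ,
      DifferentiableAt ℝ G x ∧ DifferentiableAt ℝ (deriv G) x ∧
      (1 - (x : ℂ) ^ 2) * deriv (deriv G) x - 2 * (x : ℂ) * deriv G x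
          - (c : ℂ) ^ 2 * (x : ℂ) ^ 2 * G x
        = ∫ t in (-1 : ℝ)..1, Complex.exp (Complex.I * c * x * t) *
            ((1 - (t : ℂ) ^ 2) * iteratedDeriv 2 ψ t - 2 * (t : ℂ) * deriv ψ t
              - (c : ℂ) ^ 2 * (t : ℂ) ^ 2 * ψ t) := by
  have hψ' : ContDiffOn ℝ 1 (deriv ψ) U := hψ.deriv_of_isOpen hU (by norm_num)
  have h1 : ∀ t ∈ Icc (-1 : ℝ) 1, HasDerivAt ψ (deriv ψ t) t := fun t ht =>
    ((hψ.contDiffAt (hU.mem_nhds (hsub ht))).differentiableAt (by norm_num)).hasDerivAt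
  have h2 : ∀ t ∈ Icc (-1 : ℝ) 1, HasDerivAt (deriv ψ) (deriv (deriv ψ) t) t := fun t ht =>
    ((hψ'.contDiffAt (hU.mem_nhds (hsub ht))).differentiableAt one_ne_zero).hasDerivAt
  have hψc : ContinuousOn ψ [[-1, 1]] := by
    rw [uIcc_of_le (by norm_num)]
    exact hψ.continuousOn.mono hsub
  have hG' : ∀ x : ℝ,
      HasDerivAt G (∫ t in (-1 : ℝ)..1, cexp (I * c * x * t) * (I * c * t * ψ t)) x :=
    funext hG ▸ hasDerivAt_integral_cexp_mul c hψc
  have hG'' : ∀ x : ℝ, HasDerivAt (deriv G)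
      (∫ t in (-1 : ℝ)..1, cexp (I * c * x * t) * (I * c * t * (I * c * t * ψ t))) x :=
    funext (fun x => (hG' x).deriv) ▸ hasDerivAt_integral_cexp_mul c (by fun_prop)
  intro x
  refine ⟨(hG' x).differentiableAt, (hG'' x).differentiableAt, ?_⟩
  rw [(hG'' x).deriv, (hG' x).deriv, hG x, iteratedDeriv_succ, iteratedDeriv_one,
    integral_cexp_mul_heun c x h1 h2
      ((hψ'.continuousOn_deriv_of_isOpen hU le_rfl).mono hsub)]

/-- commutation of the Heun operator with the finite Fourier transform:
for `ψ` twice continuously differentiable on a neighborhood of `[−1,1]` and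
`G = F_c[ψ]`, the function `G` is twice differentiable and `T G = F_c[T ψ]`, where `T` is
the confluent Heun operator `(T g)(x) = (1−x²)g''(x) − 2x g'(x) − c²x² g(x)`. -/
theorem stmt13 (c : ℝ) (hc : 0 < c)
    (ψ : ℝ → ℂ) (U : Set ℝ) (hU : IsOpen U) (hsub : Icc (-1 : ℝ) 1 ⊆ U)
    (hψ : ContDiffOn ℝ 2 ψ U)
    (G : ℝ → ℂ)
    (hG : ∀ x : ℝ, G x = ∫ t in (-1 : ℝ)..1, Complex.exp (Complex.I * c * x * t) * ψ t) :
    ∀ x : ℝ,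
      DifferentiableAt ℝ G x ∧ DifferentiableAt ℝ (deriv G) x ∧
      (1 - (x : ℂ) ^ 2) * deriv (deriv G) x - 2 * (x : ℂ) * deriv G x
          - (c : ℂ) ^ 2 * (x : ℂ) ^ 2 * G x
        = ∫ t in (-1 : ℝ)..1, Complex.exp (Complex.I * c * x * t) *
            ((1 - (t : ℂ) ^ 2) * iteratedDeriv 2 ψ t - 2 * (t : ℂ) * deriv ψ t
              - (c : ℂ) ^ 2 * (t : ℂ) ^ 2 * ψ t) :=
  stmt13_general c ψ U hU hsub hψ G hG
end
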